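/- arXiv:2205.03991 — 7 statements merged into one kernel-verified Lean document; each statement's English description precedes it below -/
import Mathlib

section
/- Let V be a finite set, c ≥ 2, and Ω : V×V → ℝ symmetric with 0 ≤ Ω(x,y) ≤ 1; let λ_min(Ω) denote the smallest eigenvalue of the symmetric matrix (Ω(x,y))_{x,y∈V} and assume λ_min(Ω) ≠ 0. Let h > 0 satisfy h·|λ_min(Ω)| ≤ 1, let S⁰ ∈ W, and define the geometric Euler iterates S^{k+1}(x) = exp_{S^k(x)}(h·(ΩS^k)(x)) for all x ∈ V. Then the potential values decrease monotonically: J(S^{k+1}) ≤ J(S^k) for all k ∈ ℕ. -/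
open Finset Filter Topology

noncomputable section

variable {V : Type*} [Fintype V] {c : ℕ}

/-- `(Ω S)(x)_j = ∑_y Ω x y * S y j`. -/
def omApp (Ω : V → V → ℝ) (S : V → Fin c → ℝ) (x : V) (j : Fin c) : ℝ :=
  ∑ y, Ω x y * S y j

/-- Replicator map `R_p u = Diag(p)u − ⟨p,u⟩p`. -/
def repl (p u : Fin c → ℝ) (j : Fin c) : ℝ :=
  p j * u j - (∑ i, p i * u i) * p j

/-- Lifting map `exp_p(v) = (p ⊙ e^v)/⟨p, e^v⟩`. -/
def liftMap (p v : Fin c → ℝ) (j : Fin c) : ℝ :=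
  p j * Real.exp (v j) / (∑ i, p i * Real.exp (v i))

/-- Orthogonal projection `Π₀ u = u − (⟨1,u⟩/c)·1`. -/
def proj0 {c : ℕ} (u : Fin c → ℝ) (j : Fin c) : ℝ :=
  u j - (∑ i, u i) / (c : ℝ)

/-- The potential `J(S) = −½ ∑_x ⟨S(x), (ΩS)(x)⟩`. -/
def Jpot (Ω : V → V → ℝ) (S : V → Fin c → ℝ) : ℝ :=
  -(1 / 2) * ∑ x, ∑ j, S x j * omApp Ω S x j

/-- Fisher–Rao inner product `⟨U,W⟩_S = ∑_{x,j} U_j(x) W_j(x) / S_j(x)`. -/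
def frIP (S U W : V → Fin c → ℝ) : ℝ :=
  ∑ x, ∑ j, U x j * W x j / S x j

/-- Riemannian gradient `grad_g J(S) = −R_S(ΩS)`. -/
def gradJ (Ω : V → V → ℝ) (S : V → Fin c → ℝ) (x : V) (j : Fin c) : ℝ :=
  - repl (S x) (omApp Ω S x) j

/-- The vector field `R_S(ΩS)`. -/
def RSOm (Ω : V → V → ℝ) (S : V → Fin c → ℝ) (x : V) (j : Fin c) : ℝ :=
  repl (S x) (omApp Ω S x) j

/-- Descent direction `d(S,h) = Π₀(ΩS + (h/2)·Ω·R_S(ΩS))`. -/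
def dDir (Ω : V → V → ℝ) (S : V → Fin c → ℝ) (h : ℝ) (x : V) (j : Fin c) : ℝ :=
  proj0 (fun i => omApp Ω S x i + (h / 2) * omApp Ω (RSOm Ω S) x i) j


/-- Key log inequality: for `a, b ∈ (0,1]`, `(a-b)² ≤ (a-b)(log a - log b)`. -/
lemma key_log (a b : ℝ) (ha : 0 < a) (hb : 0 < b) (ha1 : a ≤ 1) (hb1 : b ≤ 1) :
    (a - b) ^ 2 ≤ (a - b) * (Real.log a - Real.log b) := by
  rcases le_total b a with hba | hab
  · have h1 : Real.log (b / a) ≤ b / a - 1 :=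
      Real.log_le_sub_one_of_pos (div_pos hb ha)
    rw [Real.log_div hb.ne' ha.ne'] at h1
    have h2 : a - b ≤ a * (Real.log a - Real.log b) := by
      have := mul_le_mul_of_nonneg_left h1 ha.le
      have hba' : a * (b / a) = b := by field_simp
      nlinarith
    nlinarith [mul_le_mul_of_nonneg_left h2 (sub_nonneg.2 hba),
      mul_nonneg (sub_nonneg.2 hba) (sub_nonneg.2 hba)]
  · have h1 : Real.log (a / b) ≤ a / b - 1 :=
      Real.log_le_sub_one_of_pos (div_pos ha hb)
    rw [Real.log_div ha.ne' hb.ne'] at h1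
    have h2 : b - a ≤ b * (Real.log b - Real.log a) := by
      have := mul_le_mul_of_nonneg_left h1 hb.le
      have : b * (a / b) = a := by field_simp
      nlinarith [mul_le_mul_of_nonneg_left h1 hb.le]
    nlinarith [mul_le_mul_of_nonneg_left h2 (sub_nonneg.2 hab)]

lemma liftMap_prop (p v : Fin c → ℝ) (hp : ∀ j, 0 < p j) (hsum : ∑ j, p j = 1) :
    (∀ j, 0 < liftMap p v j) ∧ ∑ j, liftMap p v j = 1 := by
  have hne : (Finset.univ : Finset (Fin c)).Nonempty := by
    by_contra hcon
    rw [Finset.not_nonempty_iff_eq_empty] at hcon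
    rw [show (∑ j, p j) = ∑ j ∈ Finset.univ, p j from rfl, hcon, Finset.sum_empty] at hsum
    norm_num at hsum
  have hZ : 0 < ∑ i, p i * Real.exp (v i) :=
    Finset.sum_pos (fun i _ => mul_pos (hp i) (Real.exp_pos _)) hne
  constructor
  · intro j
    exact div_pos (mul_pos (hp j) (Real.exp_pos _)) hZ
  · unfold liftMap
    rw [← Finset.sum_div, div_self hZ.ne']

/-- One-step lower bound from the lifting map: `‖q - p‖² ≤ h ⟨q - p, u⟩`. -/
lemma step_lb (p u : Fin c → ℝ) (hp : ∀ j, 0 < p j) (hsum : ∑ j, p j = 1)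
    (h : ℝ) (hh : 0 < h) :
    ∑ j, (liftMap p (fun i => h * u i) j - p j) ^ 2
      ≤ h * ∑ j, (liftMap p (fun i => h * u i) j - p j) * u j := by
  have hne : (Finset.univ : Finset (Fin c)).Nonempty := by
    by_contra hcon
    rw [Finset.not_nonempty_iff_eq_empty] at hcon
    rw [show (∑ j, p j) = ∑ j ∈ Finset.univ, p j from rfl, hcon, Finset.sum_empty] at hsum
    norm_num at hsum
  set Z := ∑ i, p i * Real.exp (h * u i) with hZdef
  have hZ : 0 < Z := Finset.sum_pos (fun i _ => mul_pos (hp i) (Real.exp_pos _)) hne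
  set q := liftMap p (fun i => h * u i) with hqdef
  obtain ⟨hqpos, hqsum⟩ := liftMap_prop p (fun i => h * u i) hp hsum
  have hple : ∀ j, p j ≤ 1 := by
    intro j
    rw [← hsum]
    exact Finset.single_le_sum (fun i _ => (hp i).le) (Finset.mem_univ j)
  have hqle : ∀ j, q j ≤ 1 := by
    intro j
    rw [← hqsum]
    exact Finset.single_le_sum (fun i _ => (hqpos i).le) (Finset.mem_univ j)
  have hlog : ∀ j, h * u j = Real.log (q j) - Real.log (p j) + Real.log Z := by
    intro j
    have : q j = p j * Real.exp (h * u j) / Z := rfl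
    rw [this, Real.log_div (mul_pos (hp j) (Real.exp_pos _)).ne' hZ.ne',
      Real.log_mul (hp j).ne' (Real.exp_pos _).ne', Real.log_exp]
    ring
  have hDsum : ∑ j, (q j - p j) = 0 := by
    rw [Finset.sum_sub_distrib, hqsum, hsum]; ring
  have key : h * ∑ j, (q j - p j) * u j
      = ∑ j, (q j - p j) * (Real.log (q j) - Real.log (p j)) := by
    rw [Finset.mul_sum]
    have : ∀ j ∈ Finset.univ, (h * ((q j - p j) * u j))
        = (q j - p j) * (Real.log (q j) - Real.log (p j)) + (q j - p j) * Real.log Z := by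
      intro j _
      rw [show h * ((q j - p j) * u j) = (q j - p j) * (h * u j) by ring, hlog j]
      ring
    rw [Finset.sum_congr rfl this, Finset.sum_add_distrib, ← Finset.sum_mul, hDsum]
    ring
  rw [key]
  exact Finset.sum_le_sum fun j _ =>
    key_log (q j) (p j) (hqpos j) (hp j) (hqle j) (hple j)

open Matrix in
lemma quad_lb {V : Type*} [Fintype V] (Ω : V → V → ℝ) (hsymm : ∀ x y, Ω x y = Ω y x)
    (lammin : ℝ)
    (hlb : ∀ μ : ℝ, (∃ v : V → ℝ, v ≠ 0 ∧ ∀ x, ∑ y, Ω x y * v y = μ * v x) → lammin ≤ μ)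
    (w : V → ℝ) :
    lammin * ∑ x, w x ^ 2 ≤ ∑ x, ∑ y, Ω x y * w x * w y := by
  classical
  set A : Matrix V V ℝ := Matrix.of Ω with hA
  set B : Matrix V V ℝ := A - lammin • 1 with hBdef
  have hAh : A.IsHermitian := by
    ext x y
    simp [Matrix.conjTranspose, A, hsymm x y]
  have hBh : B.IsHermitian := by
    have h1 : (lammin • (1 : Matrix V V ℝ)).IsHermitian := by
      unfold Matrix.IsHermitian
      rw [Matrix.conjTranspose_smul, Matrix.conjTranspose_one, star_trivial]
    exact hAh.sub h1
  have heignn : ∀ i, 0 ≤ hBh.eigenvalues i := by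
    intro i
    have hv := hBh.mulVec_eigenvectorBasis i
    set v : V → ℝ := ⇑(hBh.eigenvectorBasis i) with hvdef
    have hvne : v ≠ 0 := by
      intro h0
      have := hBh.eigenvectorBasis.orthonormal.ne_zero i
      apply this
      ext x
      exact congrFun h0 x
    have heq : ∀ x, ∑ y, Ω x y * v y = (hBh.eigenvalues i + lammin) * v x := by
      intro x
      have h1 : (B *ᵥ v) x = hBh.eigenvalues i * v x := by
        rw [hv]; simp
      have h2 : (B *ᵥ v) x = (A *ᵥ v) x - lammin * v x := by
        simp [hBdef, Matrix.sub_mulVec, Matrix.smul_mulVec, Matrix.one_mulVec]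
      have h3 : (A *ᵥ v) x = ∑ y, Ω x y * v y := by
        simp [Matrix.mulVec, dotProduct, A]
      rw [h3.symm]
      linarith [h1, h2.symm.trans h1]
    have := hlb (hBh.eigenvalues i + lammin) ⟨v, hvne, heq⟩
    linarith
  have hpsd : B.PosSemidef := hBh.posSemidef_iff_eigenvalues_nonneg.mpr heignn
  have := hpsd.dotProduct_mulVec_nonneg w
  have hdot : dotProduct (star w) (B *ᵥ w)
      = (∑ x, ∑ y, Ω x y * w x * w y) - lammin * ∑ x, w x ^ 2 := by
    simp only [hBdef, Matrix.sub_mulVec, dotProduct_sub,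
      Matrix.smul_mulVec, Matrix.one_mulVec, dotProduct_smul]
    have h1 : dotProduct (star w) (A *ᵥ w) = ∑ x, ∑ y, Ω x y * w x * w y := by
      simp only [dotProduct, Matrix.mulVec, Pi.star_apply, star_trivial, mul_sum]
      exact Finset.sum_congr rfl fun x _ => Finset.sum_congr rfl fun y _ => by
        simp [A]; ring
    have h2 : dotProduct (star w) w = ∑ x, w x ^ 2 := by
      simp [dotProduct, pow_two]
    rw [h1, h2]; simp
  rw [hdot] at this
  linarith

/-- The bilinear form `Q(A,B) = ∑_{x,j,y} A x j · Ω x y · B y j`. -/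
def Qf (Ω : V → V → ℝ) (A B : V → Fin c → ℝ) : ℝ :=
  ∑ x, ∑ j, ∑ y, A x j * Ω x y * B y j

lemma Jpot_eq (Ω : V → V → ℝ) (S : V → Fin c → ℝ) :
    Jpot Ω S = -(1 / 2) * Qf Ω S S := by
  unfold Jpot Qf omApp
  congr 1
  refine Finset.sum_congr rfl fun x _ => Finset.sum_congr rfl fun j _ => ?_
  rw [Finset.mul_sum]
  exact Finset.sum_congr rfl fun y _ => by ring

lemma Qf_symm (Ω : V → V → ℝ) (hsymm : ∀ x y, Ω x y = Ω y x)
    (A B : V → Fin c → ℝ) : Qf Ω A B = Qf Ω B A := by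
  unfold Qf
  calc ∑ x, ∑ j, ∑ y, A x j * Ω x y * B y j
      = ∑ x, ∑ y, ∑ j, A x j * Ω x y * B y j :=
        Finset.sum_congr rfl fun x _ => Finset.sum_comm
    _ = ∑ y, ∑ x, ∑ j, A x j * Ω x y * B y j := Finset.sum_comm
    _ = ∑ x, ∑ y, ∑ j, B x j * Ω x y * A y j := by
        refine Finset.sum_congr rfl fun y _ => Finset.sum_congr rfl fun x _ =>
          Finset.sum_congr rfl fun j _ => ?_
        rw [hsymm x y]; ring
    _ = ∑ x, ∑ j, ∑ y, B x j * Ω x y * A y j :=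
        Finset.sum_congr rfl fun x _ => Finset.sum_comm

lemma Qf_expand (Ω : V → V → ℝ) (A B : V → Fin c → ℝ) :
    Qf Ω A A = Qf Ω B B + Qf Ω (fun x j => A x j - B x j) B
      + Qf Ω B (fun x j => A x j - B x j)
      + Qf Ω (fun x j => A x j - B x j) (fun x j => A x j - B x j) := by
  unfold Qf
  simp only [← Finset.sum_add_distrib]
  exact Finset.sum_congr rfl fun x _ => Finset.sum_congr rfl fun j _ =>
    Finset.sum_congr rfl fun y _ => by ring

lemma Qf_cross (Ω : V → V → ℝ) (D S : V → Fin c → ℝ) :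
    Qf Ω D S = ∑ x, ∑ j, D x j * omApp Ω S x j := by
  unfold Qf omApp
  refine Finset.sum_congr rfl fun x _ => Finset.sum_congr rfl fun j _ => ?_
  rw [Finset.mul_sum]
  exact Finset.sum_congr rfl fun y _ => by ring

lemma Qf_quad (Ω : V → V → ℝ) (hsymm : ∀ x y, Ω x y = Ω y x) (lammin : ℝ)
    (hlb : ∀ μ : ℝ, (∃ v : V → ℝ, v ≠ 0 ∧ ∀ x, ∑ y, Ω x y * v y = μ * v x) → lammin ≤ μ)
    (D : V → Fin c → ℝ) :
    lammin * (∑ x, ∑ j, (D x j) ^ 2) ≤ Qf Ω D D := by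
  have h1 : Qf Ω D D = ∑ j, ∑ x, ∑ y, Ω x y * D x j * D y j := by
    unfold Qf
    rw [Finset.sum_comm]
    exact Finset.sum_congr rfl fun j _ => Finset.sum_congr rfl fun x _ =>
      Finset.sum_congr rfl fun y _ => by ring
  have h2 : lammin * (∑ x, ∑ j, (D x j) ^ 2) = ∑ j, lammin * ∑ x, (D x j) ^ 2 := by
    rw [← Finset.mul_sum, Finset.sum_comm]
  rw [h1, h2]
  exact Finset.sum_le_sum fun j _ => quad_lb Ω hsymm lammin hlb (fun x => D x j)

theorem statement4 {V : Type*} [Fintype V] {c : ℕ} (hc : 2 ≤ c)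
    (Ω : V → V → ℝ) (hsymm : ∀ x y, Ω x y = Ω y x)
    (hnn : ∀ x y, 0 ≤ Ω x y) (hub : ∀ x y, Ω x y ≤ 1)
    (lammin : ℝ) (hlne : lammin ≠ 0)
    (heig : ∃ v : V → ℝ, v ≠ 0 ∧ ∀ x, ∑ y, Ω x y * v y = lammin * v x)
    (hlb : ∀ μ : ℝ, (∃ v : V → ℝ, v ≠ 0 ∧ ∀ x, ∑ y, Ω x y * v y = μ * v x) → lammin ≤ μ)
    (h : ℝ) (hh : 0 < h) (hbound : h * |lammin| ≤ 1)
    (S : ℕ → V → Fin c → ℝ)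
    (hS0 : ∀ x, (∀ j, 0 < S 0 x j) ∧ ∑ j, S 0 x j = 1)
    (hrec : ∀ k x, S (k + 1) x = liftMap (S k x) (fun j => h * omApp Ω (S k) x j)) :
    ∀ k : ℕ, Jpot Ω (S (k + 1)) ≤ Jpot Ω (S k) := by
  have hSk : ∀ k x, (∀ j, 0 < S k x j) ∧ ∑ j, S k x j = 1 := by
    intro k
    induction k with
    | zero => exact hS0
    | succ n ih =>
      intro x
      rw [hrec n x]
      exact liftMap_prop _ _ (ih x).1 (ih x).2
  intro k
  have hNnn : 0 ≤ ∑ x, ∑ j, (S (k + 1) x j - S k x j) ^ 2 :=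
    Finset.sum_nonneg fun x _ => Finset.sum_nonneg fun j _ => sq_nonneg _
  have hcross : (∑ x, ∑ j, (S (k + 1) x j - S k x j) ^ 2)
      ≤ h * Qf Ω (fun x j => S (k + 1) x j - S k x j) (S k) := by
    rw [Qf_cross, Finset.mul_sum]
    refine Finset.sum_le_sum fun x _ => ?_
    have hs := step_lb (S k x) (omApp Ω (S k) x) (hSk k x).1 (hSk k x).2 h hh
    simp only [hrec k x]
    exact hs
  have hquad := Qf_quad Ω hsymm lammin hlb (fun x j => S (k + 1) x j - S k x j)
  have hexp := Qf_expand Ω (S (k + 1)) (S k)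
  have hsym := Qf_symm Ω hsymm (S k) (fun x j => S (k + 1) x j - S k x j)
  have key : 0 ≤ 2 * Qf Ω (fun x j => S (k + 1) x j - S k x j) (S k)
      + Qf Ω (fun x j => S (k + 1) x j - S k x j) (fun x j => S (k + 1) x j - S k x j) := by
    nlinarith [hcross, mul_le_mul_of_nonneg_left hquad hh.le,
      mul_le_mul_of_nonneg_right hbound hNnn,
      mul_le_mul_of_nonneg_left (mul_le_mul_of_nonneg_right (neg_abs_le lammin) hNnn) hh.le,
      hNnn, hh, mul_pos hh hh]
  rw [Jpot_eq Ω (S (k + 1)), Jpot_eq Ω (S k)]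
  linarith [hexp, hsym, key]
end
end

section
/- Let V be a finite set, c ≥ 2, Ω : V×V → ℝ symmetric, and fix S⁰ ∈ W. Then the function F : (ℝ^c)^V → ℝ, F(U) = J(exp_{S⁰}(U)), is differentiable and its Euclidean gradient is ∂F(U) = −R_{exp_{S⁰}(U)}(Ω·exp_{S⁰}(U)); that is, for every direction W : V → ℝ^c, dF(U)[W] = Σ_{x∈V} ⟨−R_{exp_{S⁰(x)}(U(x))}((Ω·exp_{S⁰}(U))(x)), W(x)⟩. In particular ∂F(U) equals the Riemannian gradient grad_g J(S) = −R_S(ΩS) at S = exp_{S⁰}(U). -/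
open Finset Filter Topology

noncomputable section

variable {V : Type*} [Fintype V] {c : ℕ}

/-- Auxiliary: derivative of the lifting map. -/
lemma aux_lift_deriv {c : ℕ} (p : Fin c → ℝ) (hp : ∀ i, 0 < p i) [NeZero c]
    (v : Fin c → ℝ) (j : Fin c) :
    HasFDerivAt (fun w => liftMap p w j)
      (liftMap p v j • (ContinuousLinearMap.proj j : (Fin c → ℝ) →L[ℝ] ℝ)
        - liftMap p v j • ∑ i, liftMap p v i • (ContinuousLinearMap.proj i : (Fin c → ℝ) →L[ℝ] ℝ)) v := by
  have hD : ∀ w : Fin c → ℝ, 0 < ∑ i, p i * Real.exp (w i) := fun w =>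
    Finset.sum_pos (fun i _ => mul_pos (hp i) (Real.exp_pos _)) Finset.univ_nonempty
  have hev : ∀ (i : Fin c), HasFDerivAt (fun w : Fin c → ℝ => Real.exp (w i))
      (Real.exp (v i) • (ContinuousLinearMap.proj i : (Fin c → ℝ) →L[ℝ] ℝ)) v := fun i => by
    have := (Real.hasDerivAt_exp (v i)).comp_hasFDerivAt v
      ((ContinuousLinearMap.proj i : (Fin c → ℝ) →L[ℝ] ℝ).hasFDerivAt (x := v))
    exact this
  have hnum : HasFDerivAt (fun w : Fin c → ℝ => p j * Real.exp (w j))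
      ((p j * Real.exp (v j)) • (ContinuousLinearMap.proj j : (Fin c → ℝ) →L[ℝ] ℝ)) v := by
    simpa [smul_smul] using ((hev j).const_mul (p j))
  have hden : HasFDerivAt (fun w : Fin c → ℝ => ∑ i, p i * Real.exp (w i))
      (∑ i, (p i * Real.exp (v i)) • (ContinuousLinearMap.proj i : (Fin c → ℝ) →L[ℝ] ℝ)) v := by
    apply HasFDerivAt.fun_sum
    intro i _
    simpa [smul_smul] using ((hev i).const_mul (p i))
  have hinv : HasFDerivAt (fun w : Fin c → ℝ => (∑ i, p i * Real.exp (w i))⁻¹)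
      ((-((∑ i, p i * Real.exp (v i)) ^ 2)⁻¹) •
        ∑ i, (p i * Real.exp (v i)) • (ContinuousLinearMap.proj i : (Fin c → ℝ) →L[ℝ] ℝ)) v :=
    (hasDerivAt_inv (hD v).ne').comp_hasFDerivAt v hden
  have h := hnum.mul hinv
  have hfun : (fun w => liftMap p w j)
      = fun w : Fin c → ℝ => (p j * Real.exp (w j)) * (∑ i, p i * Real.exp (w i))⁻¹ := by
    funext w; simp [liftMap, div_eq_mul_inv]
  rw [hfun]
  refine h.congr_fderiv ?_
  ext w
  set D := ∑ i, p i * Real.exp (v i) with hDdef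
  have hD0 : D ≠ 0 := (hD v).ne'
  simp only [ContinuousLinearMap.sub_apply, ContinuousLinearMap.add_apply,
    ContinuousLinearMap.smul_apply, ContinuousLinearMap.coe_sum', Finset.sum_apply,
    ContinuousLinearMap.proj_apply, smul_eq_mul, liftMap]
  rw [← hDdef]
  have hsum : ∑ i, p i * Real.exp (v i) / D * w i = (∑ i, p i * Real.exp (v i) * w i) / D := by
    rw [Finset.sum_div]
    exact Finset.sum_congr rfl fun i _ => by rw [div_mul_eq_mul_div]
  rw [hsum]
  field_simp
  ring

lemma aux_sum_swap_symm {V : Type*} [Fintype V] {c : ℕ} (Ω : V → V → ℝ)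
    (hsymm : ∀ x y, Ω x y = Ω y x) (s A : V → Fin c → ℝ) :
    ∑ x, ∑ j, s x j * ∑ y, Ω x y * A y j = ∑ x, ∑ j, (∑ y, Ω x y * s y j) * A x j := by
  calc ∑ x, ∑ j, s x j * ∑ y, Ω x y * A y j
      = ∑ x, ∑ y, ∑ j, s x j * (Ω x y * A y j) := by
        refine Finset.sum_congr rfl fun x _ => ?_
        rw [← Finset.sum_comm]
        exact Finset.sum_congr rfl fun j _ => Finset.mul_sum _ _ _
    _ = ∑ y, ∑ x, ∑ j, s x j * (Ω x y * A y j) := Finset.sum_comm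
    _ = ∑ x, ∑ j, (∑ y, Ω x y * s y j) * A x j := by
        refine Finset.sum_congr rfl fun x _ => ?_
        rw [Finset.sum_comm]
        refine Finset.sum_congr rfl fun j _ => ?_
        rw [Finset.sum_mul]
        exact Finset.sum_congr rfl fun y _ => by rw [hsymm]; ring

lemma aux_per_point {c : ℕ} (s u w : Fin c → ℝ) :
    ∑ j, u j * (s j * w j - s j * ∑ i, s i * w i)
      = ∑ j, (s j * u j - (∑ i, s i * u i) * s j) * w j := by
  have a : ∑ j, u j * (s j * ∑ i, s i * w i) = (∑ j, s j * u j) * (∑ i, s i * w i) := by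
    rw [Finset.sum_mul]; exact Finset.sum_congr rfl fun j _ => by ring
  simp only [mul_sub, Finset.sum_sub_distrib, sub_mul]
  congr 1
  · exact Finset.sum_congr rfl fun j _ => by ring
  · rw [a, Finset.mul_sum]
    exact Finset.sum_congr rfl fun i _ => by ring

lemma aux_final {V : Type*} [Fintype V] {c : ℕ} (Ω : V → V → ℝ)
    (hsymm : ∀ x y, Ω x y = Ω y x) (s W : V → Fin c → ℝ) :
    -(1/2 : ℝ) * ∑ x, ∑ j,
        (s x j * ∑ y, Ω x y * (s y j * W y j - s y j * ∑ i, s y i * W y i)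
          + (∑ y, Ω x y * s y j) * (s x j * W x j - s x j * ∑ i, s x i * W x i))
      = ∑ x, ∑ j,
          -(s x j * (∑ y, Ω x y * s y j) - (∑ i, s x i * (∑ y, Ω x y * s y i)) * s x j)
            * W x j := by
  have hswap := aux_sum_swap_symm Ω hsymm s
    (fun y j => s y j * W y j - s y j * ∑ i, s y i * W y i)
  beta_reduce at hswap
  simp only [Finset.sum_add_distrib]
  rw [hswap]
  have hT : ∑ x, ∑ j, (∑ y, Ω x y * s y j) * (s x j * W x j - s x j * ∑ i, s x i * W x i)
      = ∑ x, ∑ j, (s x j * (∑ y, Ω x y * s y j)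
          - (∑ i, s x i * (∑ y, Ω x y * s y i)) * s x j) * W x j := by
    refine Finset.sum_congr rfl fun x _ => ?_
    simpa using aux_per_point (s x) (fun j => ∑ y, Ω x y * s y j) (W x)
  rw [hT]
  simp only [neg_mul, Finset.sum_neg_distrib]
  ring

theorem statement7 {V : Type*} [Fintype V] {c : ℕ} (hc : 2 ≤ c)
    (Ω : V → V → ℝ) (hsymm : ∀ x y, Ω x y = Ω y x)
    (S0 : V → Fin c → ℝ) (hS0 : ∀ x, (∀ j, 0 < S0 x j) ∧ ∑ j, S0 x j = 1)
    (F : (V → Fin c → ℝ) → ℝ)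
    (hF : ∀ U : V → Fin c → ℝ, F U = Jpot Ω (fun x => liftMap (S0 x) (U x))) :
    Differentiable ℝ F ∧
    ∀ U W : V → Fin c → ℝ,
      fderiv ℝ F U W
        = ∑ x, ∑ j,
            (- repl (liftMap (S0 x) (U x))
                (omApp Ω (fun y => liftMap (S0 y) (U y)) x) j) * W x j := by
  haveI : NeZero c := ⟨by omega⟩
  set s : (V → Fin c → ℝ) → V → Fin c → ℝ := fun U x => liftMap (S0 x) (U x) with hs
  set L : (V → Fin c → ℝ) → V → Fin c → ((V → Fin c → ℝ) →L[ℝ] ℝ) := fun U x j =>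
    ((s U x j • (ContinuousLinearMap.proj j : (Fin c → ℝ) →L[ℝ] ℝ)
      - s U x j • ∑ i, s U x i • (ContinuousLinearMap.proj i : (Fin c → ℝ) →L[ℝ] ℝ)).comp
        (ContinuousLinearMap.proj x)) with hL
  have hlift : ∀ (U : V → Fin c → ℝ) (x : V) (j : Fin c),
      HasFDerivAt (fun U' : V → Fin c → ℝ => liftMap (S0 x) (U' x) j) (L U x j) U := by
    intro U x j
    exact (aux_lift_deriv (S0 x) (hS0 x).1 (U x) j).comp U
      ((ContinuousLinearMap.proj x : (V → Fin c → ℝ) →L[ℝ] (Fin c → ℝ)).hasFDerivAt (x := U))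
  set Φ : (V → Fin c → ℝ) → ((V → Fin c → ℝ) →L[ℝ] ℝ) := fun U =>
    (-(1/2) : ℝ) • ∑ x, ∑ j,
      (s U x j • (∑ y, Ω x y • L U y j) + (∑ y, Ω x y * s U y j) • L U x j) with hΦ
  have hFfun : F = fun U : V → Fin c → ℝ =>
      -(1/2) * ∑ x, ∑ j, liftMap (S0 x) (U x) j * ∑ y, Ω x y * liftMap (S0 y) (U y) j := by
    funext U
    rw [hF]
    rfl
  have hFd : ∀ U : V → Fin c → ℝ, HasFDerivAt F (Φ U) U := by
    intro U
    rw [hFfun, hΦ]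
    apply HasFDerivAt.const_mul
    apply HasFDerivAt.fun_sum
    intro x _
    apply HasFDerivAt.fun_sum
    intro j _
    exact (hlift U x j).mul (HasFDerivAt.fun_sum fun y _ => (hlift U y j).const_mul (Ω x y))
  refine ⟨fun U => (hFd U).differentiableAt, fun U W => ?_⟩
  rw [(hFd U).fderiv]
  simp only [hΦ, hL, ContinuousLinearMap.smul_apply, ContinuousLinearMap.coe_sum',
    Finset.sum_apply, ContinuousLinearMap.add_apply, ContinuousLinearMap.comp_apply,
    ContinuousLinearMap.sub_apply, ContinuousLinearMap.proj_apply, smul_eq_mul]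
  simp only [repl, omApp]
  exact aux_final Ω hsymm (fun x => liftMap (S0 x) (U x)) W
end
end

section
/- Let V be a finite set, c ≥ 2, Ω : V×V → ℝ symmetric and nonnegative, and S ∈ W with R_S(ΩS) ≠ 0. Then: (a) ⟨R_S(ΩS), Π₀(ΩS)⟩ = ‖R_S(ΩS)‖²_S (Euclidean pairing on the left); (b) for every h ≥ 0 with h·|⟨R_S(ΩS), Ω·R_S(ΩS)⟩| < ‖R_S(ΩS)‖²_S, the direction d(S,h) = Π₀(ΩS + (h/2)·Ω·R_S(ΩS)) satisfies ⟨−R_S(ΩS), d(S,h)⟩ < 0, i.e., d(S,h) is a descent direction for the tangent-space parametrization of J. -/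
open Finset Filter Topology

noncomputable section

variable {V : Type*} [Fintype V] {c : ℕ}

lemma repl_sum {c : ℕ} (p u : Fin c → ℝ) (hp : ∑ i, p i = 1) : ∑ j, repl p u j = 0 := by
  simp only [repl, Finset.sum_sub_distrib, ← Finset.mul_sum, hp, mul_one, sub_self]

lemma repl_proj0 {c : ℕ} (p u v : Fin c → ℝ) (hp : ∑ i, p i = 1) :
    ∑ j, repl p u j * proj0 v j = ∑ j, repl p u j * v j := by
  simp only [proj0, mul_sub, Finset.sum_sub_distrib, ← Finset.sum_mul,
    repl_sum p u hp, zero_mul, sub_zero]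

lemma repl_dot {c : ℕ} (p u : Fin c → ℝ) (hp0 : ∀ j, 0 < p j) (hp : ∑ i, p i = 1) :
    ∑ j, repl p u j * u j = ∑ j, repl p u j * repl p u j / p j := by
  have key : ∀ j, repl p u j * u j - repl p u j * repl p u j / p j
      = (∑ i, p i * u i) * repl p u j := by
    intro j
    have hne := (hp0 j).ne'
    field_simp [repl]
    simp only [repl]
    ring
  have := Finset.sum_congr rfl (fun j (_ : j ∈ Finset.univ) => key j)
  rw [Finset.sum_sub_distrib, ← Finset.mul_sum, repl_sum p u hp, mul_zero,
    sub_eq_zero] at this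
  exact this

theorem statement8 {V : Type*} [Fintype V] {c : ℕ} (hc : 2 ≤ c)
    (Ω : V → V → ℝ) (hsymm : ∀ x y, Ω x y = Ω y x) (hnn : ∀ x y, 0 ≤ Ω x y)
    (S : V → Fin c → ℝ) (hS : ∀ x, (∀ j, 0 < S x j) ∧ ∑ j, S x j = 1)
    (hne : ∃ x j, RSOm Ω S x j ≠ 0) :
    (∑ x, ∑ j, RSOm Ω S x j * proj0 (omApp Ω S x) j
        = frIP S (RSOm Ω S) (RSOm Ω S))
    ∧ ∀ h : ℝ, 0 ≤ h →
        h * |∑ x, ∑ j, RSOm Ω S x j * omApp Ω (RSOm Ω S) x j|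
          < frIP S (RSOm Ω S) (RSOm Ω S) →
        (∑ x, ∑ j, (- RSOm Ω S x j) * dDir Ω S h x j) < 0 := by
  have hfr : frIP S (RSOm Ω S) (RSOm Ω S)
      = ∑ x, ∑ j, RSOm Ω S x j * omApp Ω S x j := by
    unfold frIP
    refine Finset.sum_congr rfl fun x _ => ?_
    simp only [RSOm]
    exact (repl_dot (S x) (omApp Ω S x) (hS x).1 (hS x).2).symm
  have ha : ∑ x, ∑ j, RSOm Ω S x j * proj0 (omApp Ω S x) j
      = frIP S (RSOm Ω S) (RSOm Ω S) := by
    rw [hfr]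
    refine Finset.sum_congr rfl fun x _ => ?_
    simp only [RSOm]
    exact repl_proj0 (S x) (omApp Ω S x) _ (hS x).2
  refine ⟨ha, fun h hh hlt => ?_⟩
  set T := ∑ x, ∑ j, RSOm Ω S x j * omApp Ω (RSOm Ω S) x j with hT
  have step : ∀ x, ∑ j, RSOm Ω S x j * dDir Ω S h x j
      = (∑ j, RSOm Ω S x j * omApp Ω S x j)
        + (h/2) * ∑ j, RSOm Ω S x j * omApp Ω (RSOm Ω S) x j := by
    intro x
    unfold dDir
    simp only [RSOm]
    rw [repl_proj0 (S x) (omApp Ω S x) _ (hS x).2]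
    rw [Finset.mul_sum, ← Finset.sum_add_distrib]
    exact Finset.sum_congr rfl fun j _ => by ring
  have hb : ∑ x, ∑ j, RSOm Ω S x j * dDir Ω S h x j
      = frIP S (RSOm Ω S) (RSOm Ω S) + (h/2) * T := by
    rw [hfr, hT, Finset.mul_sum, ← Finset.sum_add_distrib]
    exact Finset.sum_congr rfl fun x _ => step x
  have hneg : ∑ x, ∑ j, (- RSOm Ω S x j) * dDir Ω S h x j
      = -(∑ x, ∑ j, RSOm Ω S x j * dDir Ω S h x j) := by
    rw [← Finset.sum_neg_distrib]
    refine Finset.sum_congr rfl fun x _ => ?_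
    rw [← Finset.sum_neg_distrib]
    exact Finset.sum_congr rfl fun j _ => by ring
  rw [hneg, hb]
  nlinarith [abs_nonneg T, le_abs_self T, neg_abs_le T]
end
end

section
/- Let V be a finite set, c ≥ 2, Ω : V×V → ℝ symmetric with 0 ≤ Ω(x,y) ≤ 1, and S⁰ ∈ W. Then there exist sequences (h_k)_{k≥0}, (θ_k)_{k≥0} of positive reals and constants 0 < c₁ < c₂ < 1 such that the iterates S^{k+1} = exp_{S^k}(θ_k·d^k) with d^k = d(S^k, h_k) satisfy for all k: (Armijo) J(S^{k+1}) − J(S^k) ≤ c₁·θ_k·⟨grad_g J(S^k), R_{S^k}(d^k)⟩_{S^k}, and (curvature) |⟨grad_g J(S^{k+1}), R_{S^k}(d^k)⟩_{S^k}| ≤ c₂·|⟨grad_g J(S^k), R_{S^k}(d^k)⟩_{S^k}|. -/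
open Finset Filter Topology

noncomputable section

variable {V : Type*} [Fintype V] {c : ℕ}

-- helpers
lemma sum_repl (p u : Fin c → ℝ) (hp : ∑ i, p i = 1) : ∑ j, repl p u j = 0 := by
  simp only [repl, Finset.sum_sub_distrib, ← Finset.mul_sum, hp, mul_one, sub_self]

lemma repl_symm (p u w : Fin c → ℝ) :
    ∑ j, repl p u j * w j = ∑ j, repl p w j * u j := by
  simp only [repl, sub_mul, Finset.sum_sub_distrib, Finset.sum_mul, Finset.mul_sum]
  congr 1
  · exact Finset.sum_congr rfl fun j _ => by ring
  · rw [Finset.sum_comm]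
    exact Finset.sum_congr rfl fun j _ => Finset.sum_congr rfl fun i _ => by ring

lemma sum_liftMap (p v : Fin c → ℝ) (hp : ∀ j, 0 < p j) [NeZero c] :
    ∑ j, liftMap p v j = 1 := by
  have hD : 0 < ∑ i, p i * Real.exp (v i) :=
    Finset.sum_pos (fun i _ => mul_pos (hp i) (Real.exp_pos _)) ⟨default, Finset.mem_univ _⟩
  simp only [liftMap]
  rw [← Finset.sum_div, div_eq_one_iff_eq hD.ne']

lemma liftMap_zero (p : Fin c → ℝ) (hp : ∑ i, p i = 1) :
    liftMap p (fun _ => 0) = p := by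
  funext j
  simp [liftMap, hp]

lemma denom_pos (p : Fin c → ℝ) (hp : ∀ j, 0 < p j) (w : Fin c → ℝ) [NeZero c] :
    0 < ∑ i, p i * Real.exp (w i) :=
  Finset.sum_pos (fun i _ => mul_pos (hp i) (Real.exp_pos _)) ⟨default, Finset.mem_univ _⟩

lemma liftMap_pos (p v : Fin c → ℝ) (hp : ∀ j, 0 < p j) [NeZero c] (j : Fin c) :
    0 < liftMap p v j :=
  div_pos (mul_pos (hp j) (Real.exp_pos _)) (denom_pos p hp v)

lemma hasDerivAt_liftMap [NeZero c] (p w : Fin c → ℝ) (hp : ∀ j, 0 < p j) (θ : ℝ) (j : Fin c) :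
    HasDerivAt (fun t => liftMap p (fun i => t * w i) j)
      (repl (liftMap p (fun i => θ * w i)) w j) θ := by
  have hN : ∀ i : Fin c, HasDerivAt (fun t => p i * Real.exp (t * w i))
      (p i * Real.exp (θ * w i) * w i) θ := by
    intro i
    have h1 : HasDerivAt (fun t : ℝ => t * w i) (w i) θ := hasDerivAt_mul_const (w i)
    have := (h1.exp).const_mul (p i)
    refine this.congr_deriv ?_; ring
  have hD : HasDerivAt (fun t => ∑ i, p i * Real.exp (t * w i))
      (∑ i, p i * Real.exp (θ * w i) * w i) θ :=
    HasDerivAt.fun_sum (fun i _ => hN i)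
  have hDpos : (0:ℝ) < ∑ i, p i * Real.exp (θ * w i) := denom_pos p hp _
  have hdiv := (hN j).div hD hDpos.ne'
  have : (fun t => liftMap p (fun i => t * w i) j)
      = fun t => (p j * Real.exp (t * w j)) / ∑ i, p i * Real.exp (t * w i) := rfl
  rw [this]
  refine hdiv.congr_deriv ?_
  simp only [repl, liftMap]
  rw [show (∑ x, (p x * Real.exp (θ * w x) / ∑ i, p i * Real.exp (θ * w i)) * w x)
      = (∑ i, p i * Real.exp (θ * w i) * w i) / (∑ i, p i * Real.exp (θ * w i)) by
    rw [Finset.sum_div]; exact Finset.sum_congr rfl fun i _ => by ring]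
  field_simp

lemma sym_swap (Ω : V → V → ℝ) (hsymm : ∀ x y, Ω x y = Ω y x) (f g : V → Fin c → ℝ) :
    ∑ x, ∑ j, f x j * (∑ y, Ω x y * g y j) = ∑ x, ∑ j, g x j * (∑ y, Ω x y * f y j) := by
  simp only [Finset.mul_sum]
  rw [show (∑ x, ∑ j, ∑ y, f x j * (Ω x y * g y j))
      = ∑ x, ∑ y, ∑ j, f x j * (Ω x y * g y j) from
    Finset.sum_congr rfl fun x _ => Finset.sum_comm,
    show (∑ x, ∑ j, ∑ y, g x j * (Ω x y * f y j))
      = ∑ x, ∑ y, ∑ j, g x j * (Ω x y * f y j) from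
    Finset.sum_congr rfl fun x _ => Finset.sum_comm,
    Finset.sum_comm]
  exact Finset.sum_congr rfl fun y _ => Finset.sum_congr rfl fun x _ =>
    Finset.sum_congr rfl fun j _ => by rw [hsymm]; ring

lemma hasDerivAt_Jpot_curve [NeZero c] (Ω : V → V → ℝ) (hsymm : ∀ x y, Ω x y = Ω y x)
    (S : V → Fin c → ℝ) (hSpos : ∀ x j, 0 < S x j) (v : V → Fin c → ℝ) (θ : ℝ) :
    HasDerivAt (fun t => Jpot Ω (fun x => liftMap (S x) (fun j => t * v x j)))
      (-(∑ x, ∑ j, repl (liftMap (S x) (fun j => θ * v x j)) (v x) j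
          * omApp Ω (fun y => liftMap (S y) (fun j => θ * v y j)) x j)) θ := by
  set σθ : V → Fin c → ℝ := fun x => liftMap (S x) (fun j => θ * v x j) with hσθ
  have hσ : ∀ (x : V) (j : Fin c),
      HasDerivAt (fun t => liftMap (S x) (fun j' => t * v x j') j) (repl (σθ x) (v x) j) θ :=
    fun x j => hasDerivAt_liftMap (S x) (v x) (hSpos x) θ j
  have hin : ∀ (x : V) (j : Fin c),
      HasDerivAt (fun t => ∑ y, Ω x y * liftMap (S y) (fun j' => t * v y j') j)
        (∑ y, Ω x y * repl (σθ y) (v y) j) θ :=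
    fun x j => HasDerivAt.fun_sum (fun y _ => (hσ y j).const_mul (Ω x y))
  have hterm : HasDerivAt
      (fun t => ∑ x, ∑ j, liftMap (S x) (fun j' => t * v x j') j
        * ∑ y, Ω x y * liftMap (S y) (fun j' => t * v y j') j)
      (∑ x, ∑ j, (repl (σθ x) (v x) j * (∑ y, Ω x y * σθ y j)
        + σθ x j * (∑ y, Ω x y * repl (σθ y) (v y) j))) θ :=
    HasDerivAt.fun_sum fun x _ => HasDerivAt.fun_sum fun j _ => (hσ x j).mul (hin x j)
  have heq : (fun t => Jpot Ω (fun x => liftMap (S x) (fun j => t * v x j)))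
      = fun t => -(1/2) * ∑ x, ∑ j, liftMap (S x) (fun j' => t * v x j') j
        * ∑ y, Ω x y * liftMap (S y) (fun j' => t * v y j') j := rfl
  rw [heq]
  have := hterm.const_mul (-(1/2) : ℝ)
  refine this.congr_deriv ?_
  simp only [Finset.sum_add_distrib]
  rw [show (∑ x, ∑ j, σθ x j * (∑ y, Ω x y * repl (σθ y) (v y) j))
      = ∑ x, ∑ j, repl (σθ x) (v x) j * (∑ y, Ω x y * σθ y j) from
    sym_swap Ω hsymm σθ (fun x => repl (σθ x) (v x))]
  have h2 : ∀ x j, omApp Ω σθ x j = ∑ y, Ω x y * σθ y j := fun x j => rfl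
  have hx : ∀ x, liftMap (S x) (fun j => θ * v x j) = σθ x := fun _ => rfl
  simp only [h2, hx]
  ring

lemma frIP_grad (Ω : V → V → ℝ) (S T v : V → Fin c → ℝ)
    (hSpos : ∀ x j, 0 < S x j) (hT1 : ∀ x, ∑ j, T x j = 1) :
    frIP S (gradJ Ω T) (fun x => repl (S x) (v x))
      = -(∑ x, ∑ j, repl (T x) (v x) j * omApp Ω T x j) := by
  unfold frIP gradJ
  rw [← Finset.sum_neg_distrib]
  refine Finset.sum_congr rfl fun x _ => ?_
  have h0 : ∀ j, repl (S x) (v x) j / S x j = v x j - ∑ i, S x i * v x i := by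
    intro j
    rw [repl, sub_div, mul_comm, mul_div_assoc, div_self (hSpos x j).ne', mul_one,
      mul_div_assoc, div_self (hSpos x j).ne', mul_one]
  simp only [neg_mul, neg_div, mul_div_assoc, h0, mul_sub, Finset.sum_neg_distrib,
    Finset.sum_sub_distrib, ← Finset.sum_mul, sum_repl (T x) (omApp Ω T x) (hT1 x),
    zero_mul, sub_zero]
  rw [repl_symm]

lemma sum_mul_proj0 (g u : Fin c → ℝ) (hg : ∑ j, g j = 0) :
    ∑ j, g j * proj0 u j = ∑ j, g j * u j := by
  simp only [proj0, mul_sub, Finset.sum_sub_distrib, ← Finset.sum_mul, hg, zero_mul, sub_zero]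

lemma repl_self_eq (p w : Fin c → ℝ) (h1 : ∑ j, p j = 1) :
    ∑ j, repl p w j * w j = ∑ j, p j * (w j - ∑ i, p i * w i)^2 := by
  set m := ∑ i, p i * w i with hm
  have e1 : ∀ j, repl p w j * w j = p j * w j * w j - m * (p j * w j) := fun j => by
    rw [repl]; ring
  have e2 : ∀ j, p j * (w j - m)^2 = p j * w j * w j - 2 * m * (p j * w j) + m^2 * p j :=
    fun j => by ring
  simp only [e1, e2, Finset.sum_add_distrib, Finset.sum_sub_distrib, ← Finset.mul_sum, h1,
    mul_one, ← hm]
  ring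

lemma repl_self_nonneg (p w : Fin c → ℝ) (hp : ∀ j, 0 ≤ p j) (h1 : ∑ j, p j = 1) :
    0 ≤ ∑ j, repl p w j * w j := by
  rw [repl_self_eq p w h1]
  exact Finset.sum_nonneg fun j _ => mul_nonneg (hp j) (sq_nonneg _)

lemma w_const_of_zero (p w : Fin c → ℝ) (hp : ∀ j, 0 < p j) (h1 : ∑ j, p j = 1)
    (hz : ∑ j, repl p w j * w j = 0) : ∀ j, w j = ∑ i, p i * w i := by
  rw [repl_self_eq p w h1] at hz
  intro j
  have := (Finset.sum_eq_zero_iff_of_nonneg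
    (fun i _ => mul_nonneg (hp i).le (sq_nonneg _))).mp hz j (Finset.mem_univ j)
  have h2 : (w j - ∑ i, p i * w i)^2 = 0 := by
    rcases mul_eq_zero.mp this with h | h
    · exact absurd h (hp j).ne'
    · exact h
  have := pow_eq_zero_iff (n := 2) (by norm_num) |>.mp h2
  linarith

lemma Jpot_ge (Ω : V → V → ℝ) (hnn : ∀ x y, 0 ≤ Ω x y) (hub : ∀ x y, Ω x y ≤ 1)
    (T : V → Fin c → ℝ) (hpos : ∀ x j, 0 ≤ T x j) (h1 : ∀ x, ∑ j, T x j = 1) :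
    -(((Fintype.card V)^2 * c : ℕ) : ℝ) / 2 ≤ Jpot Ω T := by
  have hTle : ∀ x j, T x j ≤ 1 := by
    intro x j
    rw [← h1 x]
    exact Finset.single_le_sum (fun i _ => hpos x i) (Finset.mem_univ j)
  have hsum : ∑ x, ∑ j, T x j * omApp Ω T x j ≤ ((Fintype.card V)^2 * c : ℕ) := by
    push_cast
    calc ∑ x, ∑ j, T x j * omApp Ω T x j
        ≤ ∑ x : V, ∑ j : Fin c, (Fintype.card V : ℝ) := by
          refine Finset.sum_le_sum fun x _ => Finset.sum_le_sum fun j _ => ?_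
          have hom : omApp Ω T x j ≤ (Fintype.card V : ℝ) := by
            rw [omApp]
            calc ∑ y, Ω x y * T y j ≤ ∑ y : V, (1:ℝ) :=
                Finset.sum_le_sum fun y _ => le_trans
                  (mul_le_mul (hub x y) (hTle y j) (hpos y j) zero_le_one) (by norm_num)
            _ = (Fintype.card V : ℝ) := by simp
          calc T x j * omApp Ω T x j ≤ 1 * (Fintype.card V : ℝ) :=
              mul_le_mul (hTle x j) hom
                (Finset.sum_nonneg fun y _ => mul_nonneg (hnn x y) (hpos y j)) zero_le_one
          _ = _ := one_mul _
    _ = (Fintype.card V : ℝ)^2 * c := by simp [Finset.sum_const]; ring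
  rw [Jpot]
  nlinarith [hsum]

lemma neg_of_deriv_neg {f : ℝ → ℝ} {A : ℝ} (hf : HasDerivAt f A 0) (hA : A < 0) :
    ∃ δ > 0, ∀ t, 0 < t → t ≤ δ → f t < f 0 := by
  have hs : Tendsto (slope f 0) (𝓝[≠] 0) (𝓝 A) := hasDerivAt_iff_tendsto_slope.mp hf
  have hs' : Tendsto (slope f 0) (𝓝[>] 0) (𝓝 A) :=
    hs.mono_left (nhdsWithin_mono 0 (fun t ht => ne_of_gt ht))
  have hev : ∀ᶠ t in 𝓝[>] (0:ℝ), slope f 0 t < 0 := hs'.eventually_lt_const hA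
  rw [eventually_nhdsWithin_iff] at hev
  rcases Metric.eventually_nhds_iff.mp hev with ⟨ε, hε, hball⟩
  refine ⟨ε/2, by linarith, fun t ht htε => ?_⟩
  have hd : dist t 0 < ε := by
    rw [Real.dist_eq, sub_zero, abs_of_pos ht]; linarith
  have := hball hd ht
  rw [slope_def_field] at this
  have h2 : (f t - f 0) / t < 0 := by
    simpa [div_eq_iff ht.ne'] using this
  rcases div_neg_iff.mp h2 with ⟨h3, h4⟩ | ⟨h3, h4⟩
  · linarith
  · linarith

lemma wolfe_scalar (φ E : ℝ → ℝ) (hφ : ∀ t, HasDerivAt φ (E t) t)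
    (M : ℝ) (hM : ∀ t, -M ≤ φ t) (hA : E 0 < 0) :
    ∃ ξ > 0, φ ξ - φ 0 ≤ (1/4) * ξ * E 0 ∧ |E ξ| ≤ (1/2) * |E 0| := by
  set A := E 0 with hAdef
  set ψ : ℝ → ℝ := fun t => φ t - φ 0 - 1/4 * A * t with hψdef
  have hψd : ∀ t, HasDerivAt ψ (E t - 1/4 * A) t := by
    intro t
    have h1 : HasDerivAt (fun s : ℝ => 1/4 * A * s) (1/4 * A) t := by
      simpa using (hasDerivAt_id t).const_mul (1/4 * A)
    exact ((hφ t).sub_const _).sub h1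
  have hψc : Continuous ψ := by
    refine continuous_iff_continuousAt.mpr fun t => (hψd t).continuousAt
  have hψ0 : ψ 0 = 0 := by simp [hψdef]
  -- small t: ψ < 0
  have hd0 : HasDerivAt ψ (E 0 - 1/4 * A) 0 := hψd 0
  have hneg0 : E 0 - 1/4 * A < 0 := by rw [← hAdef]; linarith
  obtain ⟨δ, hδpos, hδ⟩ := neg_of_deriv_neg hd0 hneg0
  have hδneg : ∀ t, 0 < t → t ≤ δ → ψ t < 0 := by
    intro t h1 h2; have := hδ t h1 h2; rwa [hψ0] at this
  -- large T: ψ > 0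
  set T : ℝ := (M + |φ 0| + 1) / (1/4 * (-A)) with hT
  have hTpos : 0 < T := by
    apply div_pos
    · linarith [hM 0, le_abs_self (φ 0)]
    · linarith
  have hAne : A ≠ 0 := ne_of_lt hA
  have h4A : 1/4 * A * T = -(M + |φ 0| + 1) := by
    rw [hT]; field_simp
  have hψT : 1 ≤ ψ T := by
    have he : ψ T = φ T - φ 0 + (M + |φ 0| + 1) := by
      simp only [hψdef]; rw [h4A]; ring
    rw [he]
    linarith [hM T, le_abs_self (φ 0)]
  -- least zero of ψ on [δ, T]
  have hδT : δ < T := by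
    by_contra hcon
    push_neg at hcon
    exact absurd (hδneg T hTpos hcon) (by linarith)
  have hivt := intermediate_value_Icc hδT.le hψc.continuousOn (a := δ) (b := T)
  have h0mem : (0:ℝ) ∈ Set.Icc (ψ δ) (ψ T) :=
    ⟨(hδneg δ hδpos le_rfl).le, by linarith⟩
  obtain ⟨z, hzmem, hz0⟩ := hivt h0mem
  set Z : Set ℝ := Set.Icc δ T ∩ {t | ψ t = 0} with hZ
  have hZne : Z.Nonempty := ⟨z, hzmem, hz0⟩
  have hZclosed : IsClosed Z := isClosed_Icc.inter (isClosed_eq hψc continuous_const)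
  have hZbdd : BddBelow Z := ⟨δ, fun t ht => ht.1.1⟩
  set θs := sInf Z with hθs
  have hθmem : θs ∈ Z := hZclosed.csInf_mem hZne hZbdd
  have hθδ : δ < θs := lt_of_le_of_ne hθmem.1.1 (by
    intro hcon
    exact absurd hθmem.2 (by rw [← hcon]; exact (hδneg δ hδpos le_rfl).ne))
  have hθpos : 0 < θs := lt_trans hδpos hθδ
  have hψθ : ψ θs = 0 := hθmem.2
  -- ψ ≤ 0 on (0, θs)
  have hle : ∀ t, 0 < t → t < θs → ψ t ≤ 0 := by
    intro t ht htθ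
    rcases le_or_gt t δ with hcase | hcase
    · exact (hδneg t ht hcase).le
    · by_contra hcon
      push_neg at hcon
      have hivt2 := intermediate_value_Icc hcase.le hψc.continuousOn (a := δ) (b := t)
      have : (0:ℝ) ∈ Set.Icc (ψ δ) (ψ t) := ⟨(hδneg δ hδpos le_rfl).le, hcon.le⟩
      obtain ⟨z', hz'mem, hz'0⟩ := hivt2 this
      have hz'Z : z' ∈ Z := ⟨⟨hz'mem.1, le_trans hz'mem.2 (le_trans htθ.le hθmem.1.2)⟩, hz'0⟩
      have := csInf_le hZbdd hz'Z
      linarith [hz'mem.2]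
  -- MVT
  obtain ⟨ξ, hξmem, hξeq⟩ := exists_hasDerivAt_eq_slope φ E hθpos
    (fun t _ => (hφ t).continuousAt.continuousWithinAt) (fun t _ => hφ t)
  have hslope : (φ θs - φ 0) / (θs - 0) = 1/4 * A := by
    have : φ θs - φ 0 = 1/4 * A * θs := by
      have := hψθ
      simp only [hψdef] at this
      linarith
    rw [this, sub_zero]
    field_simp
  refine ⟨ξ, hξmem.1, ?_, ?_⟩
  · have := hle ξ hξmem.1 hξmem.2
    simp only [hψdef] at this
    ring_nf at this ⊢
    linarith
  · rw [hξeq, hslope, abs_mul]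
    rw [abs_of_pos (by norm_num : (0:ℝ) < 1/4)]
    have : (0:ℝ) ≤ |A| := abs_nonneg _
    linarith

lemma step_exists [NeZero c] (Ω : V → V → ℝ) (hsymm : ∀ x y, Ω x y = Ω y x)
    (hnn : ∀ x y, 0 ≤ Ω x y) (hub : ∀ x y, Ω x y ≤ 1)
    (S : V → Fin c → ℝ) (hS : ∀ x, (∀ j, 0 < S x j) ∧ ∑ j, S x j = 1) :
    ∃ h θ : ℝ, ∃ S' : V → Fin c → ℝ, 0 < h ∧ 0 < θ ∧
      (∀ x, (∀ j, 0 < S' x j) ∧ ∑ j, S' x j = 1) ∧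
      (∀ x, S' x = liftMap (S x) (fun j => θ * dDir Ω S h x j)) ∧
      (Jpot Ω S' - Jpot Ω S
        ≤ (1/4) * θ * frIP S (gradJ Ω S) (fun x => repl (S x) (dDir Ω S h x))) ∧
      (|frIP S (gradJ Ω S') (fun x => repl (S x) (dDir Ω S h x))|
        ≤ (1/2) * |frIP S (gradJ Ω S) (fun x => repl (S x) (dDir Ω S h x))|) := by
  have hSpos : ∀ x j, 0 < S x j := fun x => (hS x).1
  have hS1 : ∀ x, ∑ j, S x j = 1 := fun x => (hS x).2
  have hxvar : ∀ x, 0 ≤ ∑ j, RSOm Ω S x j * omApp Ω S x j := fun x =>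
    repl_self_nonneg (S x) (omApp Ω S x) (fun j => (hSpos x j).le) (hS1 x)
  set a := ∑ x, ∑ j, RSOm Ω S x j * omApp Ω S x j with hadef
  have ha0 : 0 ≤ a := Finset.sum_nonneg fun x _ => hxvar x
  by_cases hzero : a = 0
  · -- critical point : direction is zero, stay put
    have hxz : ∀ x, ∑ j, RSOm Ω S x j * omApp Ω S x j = 0 := fun x =>
      (Finset.sum_eq_zero_iff_of_nonneg (fun x _ => hxvar x)).mp hzero x (Finset.mem_univ x)
    have hconst : ∀ x j, omApp Ω S x j = ∑ i, S x i * omApp Ω S x i := fun x =>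
      w_const_of_zero (S x) (omApp Ω S x) (hSpos x) (hS1 x) (hxz x)
    have hg0 : ∀ x j, RSOm Ω S x j = 0 := by
      intro x j
      show repl (S x) (omApp Ω S x) j = 0
      rw [repl, hconst x j]
      ring
    have hd0 : ∀ x j, dDir Ω S 1 x j = 0 := by
      intro x j
      rw [dDir, proj0]
      have hom0 : ∀ i, omApp Ω (RSOm Ω S) x i = 0 := by
        intro i
        rw [omApp]
        exact Finset.sum_eq_zero fun y _ => by rw [hg0 y i, mul_zero]
      simp only [hom0, mul_zero, add_zero]
      rw [hconst x j, Finset.sum_congr rfl (fun i _ => hconst x i), Finset.sum_const,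
        Finset.card_univ, Fintype.card_fin, nsmul_eq_mul]
      have hcne : (c:ℝ) ≠ 0 := Nat.cast_ne_zero.mpr (NeZero.ne c)
      field_simp
      ring
    have hrepl0 : ∀ x j, repl (S x) (dDir Ω S 1 x) j = 0 := by
      intro x j
      rw [repl]
      simp [hd0]
    have hfr0 : ∀ (U : V → Fin c → ℝ),
        frIP S U (fun x => repl (S x) (dDir Ω S 1 x)) = 0 := by
      intro U
      rw [frIP]
      exact Finset.sum_eq_zero fun x _ => Finset.sum_eq_zero fun j _ => by
        rw [hrepl0 x j, mul_zero, zero_div]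
    refine ⟨1, 1, S, one_pos, one_pos, hS, ?_, ?_, ?_⟩
    · intro x
      rw [show (fun j => (1:ℝ) * dDir Ω S 1 x j) = fun _ => (0:ℝ) by
        funext j; rw [hd0 x j, mul_zero], liftMap_zero (S x) (hS1 x)]
    · rw [hfr0, sub_self]
      norm_num
    · rw [hfr0]
      simp
  · -- non-critical : Wolfe line search
    have hapos : 0 < a := lt_of_le_of_ne ha0 (Ne.symm hzero)
    set b := ∑ x, ∑ j, RSOm Ω S x j * omApp Ω (RSOm Ω S) x j with hbdef
    have hden : 0 < a + |b| + 1 := by positivity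
    set h := a / (a + |b| + 1) with hhdef
    have hhpos : 0 < h := div_pos hapos hden
    set d := dDir Ω S h with hddef
    -- the initial slope
    have hA : frIP S (gradJ Ω S) (fun x => repl (S x) (d x)) = -(a + h/2 * b) := by
      rw [frIP_grad Ω S S d hSpos hS1, neg_inj, hadef, hbdef, Finset.mul_sum,
        ← Finset.sum_add_distrib]
      refine Finset.sum_congr rfl fun x _ => ?_
      rw [repl_symm (S x) (d x) (omApp Ω S x)]
      have hgsum : ∑ j, repl (S x) (omApp Ω S x) j = 0 := sum_repl _ _ (hS1 x)
      have : ∀ j, d x j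
          = proj0 (fun i => omApp Ω S x i + (h/2) * omApp Ω (RSOm Ω S) x i) j := fun j => rfl
      calc ∑ j, repl (S x) (omApp Ω S x) j * d x j
          = ∑ j, repl (S x) (omApp Ω S x) j
              * (omApp Ω S x j + (h/2) * omApp Ω (RSOm Ω S) x j) := by
            simp only [this]
            exact sum_mul_proj0 _ _ hgsum
        _ = ∑ j, RSOm Ω S x j * omApp Ω S x j
              + h/2 * ∑ j, RSOm Ω S x j * omApp Ω (RSOm Ω S) x j := by
            have hR : RSOm Ω S x = repl (S x) (omApp Ω S x) := rfl
            rw [hR]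
            simp only [mul_add, Finset.sum_add_distrib, Finset.mul_sum]
            congr 1
            exact Finset.sum_congr rfl fun j _ => by ring
    have hb1 : h * |b| ≤ a := by
      rw [hhdef, div_mul_eq_mul_div, div_le_iff₀ hden]
      nlinarith [abs_nonneg b]
    have hApos : 0 < a + h/2 * b := by
      nlinarith [neg_abs_le b, hhpos.le]
    -- the curve and its derivative
    set σ : ℝ → V → Fin c → ℝ := fun t x => liftMap (S x) (fun j => t * d x j) with hσdef
    have hσpos : ∀ t x j, 0 < σ t x j := fun t x j => liftMap_pos _ _ (hSpos x) j
    have hσ1 : ∀ t x, ∑ j, σ t x j = 1 := fun t x => sum_liftMap _ _ (hSpos x)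
    have hσ0 : σ 0 = S := by
      funext x
      show liftMap (S x) (fun j => 0 * d x j) = S x
      rw [show (fun j => (0:ℝ) * d x j) = fun _ => (0:ℝ) by funext j; rw [zero_mul],
        liftMap_zero (S x) (hS1 x)]
    set φ : ℝ → ℝ := fun t => Jpot Ω (σ t) with hφdef
    set E : ℝ → ℝ := fun t => -(∑ x, ∑ j, repl (σ t x) (d x) j * omApp Ω (σ t) x j) with hEdef
    have hφd : ∀ t, HasDerivAt φ (E t) t := fun t =>
      hasDerivAt_Jpot_curve Ω hsymm S hSpos d t
    have hEt : ∀ t, E t = frIP S (gradJ Ω (σ t)) (fun x => repl (S x) (d x)) := fun t =>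
      (frIP_grad Ω S (σ t) d hSpos (hσ1 t)).symm
    have hE0 : E 0 = frIP S (gradJ Ω S) (fun x => repl (S x) (d x)) := by
      rw [hEt 0, hσ0]
    have hE0neg : E 0 < 0 := by rw [hE0, hA]; linarith
    have hMbd : ∀ t, -((((Fintype.card V)^2 * c : ℕ) : ℝ) / 2) ≤ φ t := by
      intro t
      rw [← neg_div]
      exact Jpot_ge Ω hnn hub (σ t) (fun x j => (hσpos t x j).le) (hσ1 t)
    obtain ⟨ξ, hξpos, harm, hcurv⟩ := wolfe_scalar φ E hφd _ hMbd hE0neg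
    refine ⟨h, ξ, σ ξ, hhpos, hξpos, fun x => ⟨hσpos ξ x, hσ1 ξ x⟩, fun x => rfl, ?_, ?_⟩
    · have h1 : φ ξ = Jpot Ω (σ ξ) := rfl
      have h2 : φ 0 = Jpot Ω S := by rw [hφdef]; simp only [hσ0]
      rw [← h1, ← h2, ← hE0]
      exact harm
    · rw [← hEt ξ, ← hE0]
      exact hcurv

theorem statement9 {V : Type*} [Fintype V] {c : ℕ} (hc : 2 ≤ c)
    (Ω : V → V → ℝ) (hsymm : ∀ x y, Ω x y = Ω y x)
    (hnn : ∀ x y, 0 ≤ Ω x y) (hub : ∀ x y, Ω x y ≤ 1)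
    (S0 : V → Fin c → ℝ) (hS0 : ∀ x, (∀ j, 0 < S0 x j) ∧ ∑ j, S0 x j = 1) :
    ∃ (h θ : ℕ → ℝ) (c₁ c₂ : ℝ) (S : ℕ → V → Fin c → ℝ),
      (∀ k, 0 < h k) ∧ (∀ k, 0 < θ k)
      ∧ 0 < c₁ ∧ c₁ < c₂ ∧ c₂ < 1
      ∧ S 0 = S0
      ∧ (∀ k x, S (k + 1) x = liftMap (S k x) (fun j => θ k * dDir Ω (S k) (h k) x j))
      ∧ (∀ k, -- Armijo condition
          Jpot Ω (S (k + 1)) - Jpot Ω (S k)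
            ≤ c₁ * θ k *
              frIP (S k) (gradJ Ω (S k)) (fun x => repl (S k x) (dDir Ω (S k) (h k) x)))
      ∧ (∀ k, -- curvature condition
          |frIP (S k) (gradJ Ω (S (k + 1))) (fun x => repl (S k x) (dDir Ω (S k) (h k) x))|
            ≤ c₂ *
              |frIP (S k) (gradJ Ω (S k)) (fun x => repl (S k x) (dDir Ω (S k) (h k) x))|) := by
  haveI : NeZero c := ⟨by omega⟩
  have H := fun (S : V → Fin c → ℝ) (hS : ∀ x, (∀ j, 0 < S x j) ∧ ∑ j, S x j = 1) =>
    step_exists Ω hsymm hnn hub S hS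
  choose! hf θf S'f hp1 hp2 hp3 hp4 hp5 hp6 using H
  let Seq : ℕ → V → Fin c → ℝ := fun k => Nat.rec S0 (fun _ T => S'f T) k
  have hSeqs : ∀ k, Seq (k + 1) = S'f (Seq k) := fun k => rfl
  have hvalid : ∀ k, ∀ x, (∀ j, 0 < Seq k x j) ∧ ∑ j, Seq k x j = 1 := by
    intro k
    induction k with
    | zero => exact hS0
    | succ n ih => rw [hSeqs n]; exact hp3 (Seq n) ih
  refine ⟨fun k => hf (Seq k), fun k => θf (Seq k), 1/4, 1/2, Seq,
    fun k => hp1 _ (hvalid k), fun k => hp2 _ (hvalid k),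
    by norm_num, by norm_num, by norm_num, rfl, ?_, ?_, ?_⟩
  · intro k x
    rw [hSeqs k]
    exact hp4 (Seq k) (hvalid k) x
  · intro k
    rw [hSeqs k]
    exact hp5 (Seq k) (hvalid k)
  · intro k
    rw [hSeqs k]
    exact hp6 (Seq k) (hvalid k)
end
end

section
/- Let V be a finite set, c ≥ 2, and Ω : V×V → ℝ symmetric and nonnegative with Ω(x₀,y₀) > 0 for some x₀,y₀ ∈ V. Suppose S* ∈ W (i.e., S*_j(x) > 0 for all x, j) satisfies the equilibrium condition (ΩS*)_j(x) = ⟨S*(x),(ΩS*)(x)⟩ for all x ∈ V and all j ∈ {1,…,c}. Then S* is not a local minimizer of J on W̄: for every δ > 0 there exists S ∈ W with ‖S − S*‖ < δ and J(S) < J(S*). -/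
open Finset Filter Topology

noncomputable section

variable {V : Type*} [Fintype V] {c : ℕ}

theorem statement11 {V : Type*} [Fintype V] {c : ℕ} (hc : 2 ≤ c)
    (Ω : V → V → ℝ) (hsymm : ∀ x y, Ω x y = Ω y x) (hnn : ∀ x y, 0 ≤ Ω x y)
    (hpos : ∃ x₀ y₀, 0 < Ω x₀ y₀)
    (Sstar : V → Fin c → ℝ)
    (hW : ∀ x, (∀ j, 0 < Sstar x j) ∧ ∑ j, Sstar x j = 1)
    (heq : ∀ x j, omApp Ω Sstar x j = ∑ i, Sstar x i * omApp Ω Sstar x i) :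
    ∀ δ : ℝ, 0 < δ → ∃ S : V → Fin c → ℝ,
      (∀ x, (∀ j, 0 < S x j) ∧ ∑ j, S x j = 1) ∧
      Real.sqrt (∑ x, ∑ j, (S x j - Sstar x j) ^ 2) < δ ∧
      Jpot Ω S < Jpot Ω Sstar := by
  intro δ hδ
  obtain ⟨x₀, y₀, hΩpos⟩ := hpos
  haveI : Nonempty V := ⟨x₀⟩
  have hc0 : 0 < c := by omega
  set j0 : Fin c := ⟨0, by omega⟩ with hj0def
  set j1 : Fin c := ⟨1, by omega⟩ with hj1def
  have hj01 : j0 ≠ j1 := by simp [hj0def, hj1def, Fin.ext_iff]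
  set v : Fin c → ℝ := fun j => (if j = j0 then 1 else 0) + (if j = j1 then -1 else 0) with hvdef
  have hv_sum : ∑ j, v j = 0 := by
    simp [hvdef, Finset.sum_add_distrib]
  have hv_sq : ∑ j, v j ^ 2 = 2 := by
    have e : ∀ j, v j ^ 2 = (if j = j0 then (1:ℝ) else 0) + (if j = j1 then 1 else 0) := by
      intro j
      by_cases h0 : j = j0
      · subst h0; simp [hvdef, hj01]
      · by_cases h1 : j = j1
        · subst h1; simp [hvdef, Ne.symm hj01, h0]
        · simp [hvdef, h0, h1]
    simp only [e, Finset.sum_add_distrib, Finset.sum_ite_eq', Finset.mem_univ, if_true]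
    norm_num
  have hv_bd : ∀ j, -1 ≤ v j ∧ v j ≤ 1 := by
    intro j
    simp only [hvdef]
    split_ifs <;> norm_num
  haveI : Nonempty (Fin c) := ⟨j0⟩
  have hne : (Finset.univ : Finset (V × Fin c)).Nonempty := Finset.univ_nonempty
  set m := Finset.univ.inf' hne (fun p : V × Fin c => Sstar p.1 p.2) with hmdef
  have hm_pos : 0 < m := (Finset.lt_inf'_iff hne).2 (fun p _ => (hW p.1).1 p.2)
  have hm_le : ∀ x j, m ≤ Sstar x j := fun x j =>
    Finset.inf'_le _ (Finset.mem_univ (x, j))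
  set K := Real.sqrt (2 * (Fintype.card V : ℝ)) with hKdef
  have hK0 : 0 ≤ K := Real.sqrt_nonneg _
  set t := min (m / 2) (δ / (2 * (K + 1))) with htdef
  have ht_pos : 0 < t := lt_min (by linarith) (by positivity)
  have htm : t ≤ m / 2 := min_le_left _ _
  have htδ : t ≤ δ / (2 * (K + 1)) := min_le_right _ _
  refine ⟨fun x j => Sstar x j + t * v j, ?_, ?_, ?_⟩
  · intro x
    constructor
    · intro j
      show 0 < Sstar x j + t * v j
      have h1 := (hv_bd j).1
      have h2 := hm_le x j
      nlinarith
    · show ∑ j, (Sstar x j + t * v j) = 1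
      rw [Finset.sum_add_distrib, (hW x).2, ← Finset.mul_sum, hv_sum]
      ring
  · show Real.sqrt (∑ x : V, ∑ j, ((Sstar x j + t * v j) - Sstar x j) ^ 2) < δ
    have hsum : ∑ x : V, ∑ j, ((Sstar x j + t * v j) - Sstar x j) ^ 2
        = t ^ 2 * (2 * (Fintype.card V : ℝ)) := by
      have e1 : ∀ x : V, ∑ j, ((Sstar x j + t * v j) - Sstar x j) ^ 2 = t ^ 2 * 2 := by
        intro x
        have e : ∀ j, ((Sstar x j + t * v j) - Sstar x j) ^ 2 = t ^ 2 * v j ^ 2 := by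
          intro j; ring
        rw [Finset.sum_congr rfl (fun j _ => e j), ← Finset.mul_sum, hv_sq]
      rw [Finset.sum_congr rfl (fun x _ => e1 x), Finset.sum_const, Finset.card_univ,
        nsmul_eq_mul]
      ring
    rw [hsum, Real.sqrt_mul (sq_nonneg t), Real.sqrt_sq ht_pos.le, ← hKdef]
    have hKpos : 0 < 2 * (K + 1) := by linarith
    have h1 : t * K ≤ δ / (2 * (K + 1)) * K :=
      mul_le_mul_of_nonneg_right htδ hK0
    have h2 : δ / (2 * (K + 1)) * K < δ := by
      rw [div_mul_eq_mul_div, div_lt_iff₀ hKpos]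
      nlinarith
    linarith
  · -- the potential decreases
    set r : V → ℝ := fun x => ∑ y, Ω x y with hrdef
    set L : V → ℝ := fun x => ∑ i, Sstar x i * omApp Ω Sstar x i with hLdef
    set W : V → ℝ := fun x => ∑ j, Sstar x j * v j with hWdef
    have hrx : ∀ x, r x = ∑ y, Ω x y := fun _ => rfl
    have hLx : ∀ x, L x = ∑ i, Sstar x i * omApp Ω Sstar x i := fun _ => rfl
    have hWx : ∀ x, W x = ∑ j, Sstar x j * v j := fun _ => rfl
    have homS : ∀ x j, omApp Ω (fun x j => Sstar x j + t * v j) x j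
        = L x + t * v j * r x := by
      intro x j
      have h1 : omApp Ω (fun x j => Sstar x j + t * v j) x j
          = omApp Ω Sstar x j + (∑ y, Ω x y) * (t * v j) := by
        simp only [omApp, mul_add, Finset.sum_add_distrib, Finset.sum_mul]
      rw [h1, heq x j, ← hLx x, ← hrx x]
      ring
    have hinner : ∀ x : V, ∑ j, (Sstar x j + t * v j) * (L x + t * v j * r x)
        = L x + t * r x * W x + 2 * t ^ 2 * r x := by
      intro x
      have e : ∀ j, (Sstar x j + t * v j) * (L x + t * v j * r x)
          = L x * Sstar x j + (t * r x) * (Sstar x j * v j)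
            + (t * L x) * v j + (t ^ 2 * r x) * v j ^ 2 := by
        intro j; ring
      rw [Finset.sum_congr rfl (fun j _ => e j)]
      rw [Finset.sum_add_distrib, Finset.sum_add_distrib, Finset.sum_add_distrib,
        ← Finset.mul_sum, ← Finset.mul_sum, ← Finset.mul_sum, ← Finset.mul_sum,
        (hW x).2, hv_sum, hv_sq, ← hWx x]
      ring
    have hWzero : ∀ y : V, ∑ x, Ω y x * W x = 0 := by
      intro y
      have e : ∀ x : V, Ω y x * W x = ∑ j, (Ω y x * Sstar x j) * v j := by
        intro x
        simp only [hWdef, Finset.mul_sum, mul_assoc]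
      rw [Finset.sum_congr rfl (fun x _ => e x), Finset.sum_comm]
      have e2 : ∀ j : Fin c, ∑ x, (Ω y x * Sstar x j) * v j = L y * v j := by
        intro j
        rw [← Finset.sum_mul]
        have h3 : (∑ x, Ω y x * Sstar x j) = omApp Ω Sstar y j := rfl
        rw [h3, heq y j, ← hLx y]
      rw [Finset.sum_congr rfl (fun j _ => e2 j), ← Finset.mul_sum, hv_sum, mul_zero]
    have hcross : ∑ x, r x * W x = 0 := by
      have e : ∀ x : V, r x * W x = ∑ y, Ω y x * W x := by
        intro x
        rw [hrx x, Finset.sum_mul]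
        exact Finset.sum_congr rfl (fun y _ => by rw [hsymm x y])
      rw [Finset.sum_congr rfl (fun x _ => e x), Finset.sum_comm]
      simp [hWzero]
    have hSig : 0 < ∑ x, r x := by
      apply Finset.sum_pos' (fun x _ => Finset.sum_nonneg (fun y _ => hnn x y))
      exact ⟨x₀, Finset.mem_univ x₀,
        Finset.sum_pos' (fun y _ => hnn x₀ y) ⟨y₀, Finset.mem_univ y₀, hΩpos⟩⟩
    have hJstar : Jpot Ω Sstar = -(1 / 2) * ∑ x, L x := rfl
    have e : ∀ x : V, ∑ j, (Sstar x j + t * v j)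
          * omApp Ω (fun x j => Sstar x j + t * v j) x j
        = L x + t * r x * W x + 2 * t ^ 2 * r x := by
      intro x
      rw [Finset.sum_congr rfl (fun j _ => by rw [homS x j])]
      exact hinner x
    have hsplit : ∑ x, (L x + t * r x * W x + 2 * t ^ 2 * r x)
        = (∑ x, L x) + t * (∑ x, r x * W x) + 2 * t ^ 2 * (∑ x, r x) := by
      rw [Finset.sum_add_distrib, Finset.sum_add_distrib]
      congr 1
      · congr 1
        rw [Finset.mul_sum]
        exact Finset.sum_congr rfl (fun x _ => by ring)
      · rw [Finset.mul_sum]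
    have hJnew : Jpot Ω (fun x j => Sstar x j + t * v j)
        = Jpot Ω Sstar - t ^ 2 * ∑ x, r x := by
      calc Jpot Ω (fun x j => Sstar x j + t * v j)
          = -(1 / 2) * ∑ x, ∑ j, (Sstar x j + t * v j)
              * omApp Ω (fun x j => Sstar x j + t * v j) x j := rfl
        _ = -(1 / 2) * ∑ x, (L x + t * r x * W x + 2 * t ^ 2 * r x) := by
            rw [Finset.sum_congr rfl (fun x _ => e x)]
        _ = Jpot Ω Sstar - t ^ 2 * ∑ x, r x := by
            rw [hsplit, hcross, hJstar]; ring
    rw [hJnew]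
    have h4 : 0 < t ^ 2 * ∑ x, r x := by positivity
    linarith
end
end

section
/- Let V be a finite set, c ≥ 2, Ω : V×V → ℝ symmetric and nonnegative. Let (S^k) ⊂ W be defined by S^{k+1} = exp_{S^k}(θ_k·d(S^k,h_k)) with θ_k ∈ [θ_min, θ_max] ⊂ (0,∞), h_k > 0 with h_k·|⟨R_{S^k}(ΩS^k), Ω·R_{S^k}(ΩS^k)⟩| < ‖R_{S^k}(ΩS^k)‖²_{S^k}, Σ_{k≥0} h_k < ∞, the Armijo condition J(S^{k+1}) − J(S^k) ≤ c₁·θ_k·⟨grad_g J(S^k), R_{S^k}(d(S^k,h_k))⟩_{S^k} holding for all k with a fixed c₁ ∈ (0,1), and θ_k → θ* > 0. Let S* ∈ W̄ be a limit point of (S^k), for each x set J₊(S*(x)) = {j ∈ {1,…,c} : (ΩS*)_j(x) − ⟨S*(x),(ΩS*)(x)⟩ < 0}, assume J₊(S*(x)) ≠ ∅ for at least one x ∈ V, and set Q(S) = Σ_{x∈V} Σ_{j∈J₊(S*(x))} S_j(x). Then there exist ε > 0, M* > 1 and an index k₀ such that for all k ≥ k₀ with ‖S* − S^k‖ < ε: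 Q(S^{k+1}) − Q(S^k) < (θ_k/M*)·Σ_{x∈V} Σ_{j∈J₊(S*(x))} S^k_j(x)·((ΩS*)_j(x) − ⟨(ΩS*)(x), S*(x)⟩) < 0. -/
open Finset Filter Topology

noncomputable section

variable {V : Type*} [Fintype V] {c : ℕ}

/-- The index set `J₊(S*(x)) = {j : (ΩS*)_j(x) − ⟨S*(x),(ΩS*)(x)⟩ < 0}`. -/
def Jplus (Ω : V → V → ℝ) (Sstar : V → Fin c → ℝ) (x : V) : Finset (Fin c) :=
  Finset.univ.filter
    (fun j => omApp Ω Sstar x j - (∑ i, Sstar x i * omApp Ω Sstar x i) < 0)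

/-- Convexity bound for the exponential on `[-B, 0]`. -/
lemma exp_lin_aux {B t : ℝ} (hB : 0 < B) (ht0 : t ≤ 0) (htB : -B ≤ t) :
    Real.exp t - 1 ≤ t * (1 - Real.exp (-B)) / B := by
  set s : ℝ := -t / B with hs
  have hs0 : 0 ≤ s := div_nonneg (by linarith) hB.le
  have hs1 : s ≤ 1 := by
    rw [hs, div_le_one hB]; linarith
  have hconv := convexOn_exp.2 (Set.mem_univ (0:ℝ)) (Set.mem_univ (-B))
    (by linarith : (0:ℝ) ≤ 1 - s) hs0 (by ring)
  have harg : (1 - s) • (0:ℝ) + s • (-B) = t := by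
    simp only [smul_eq_mul, hs]; field_simp; ring
  rw [harg] at hconv
  simp only [smul_eq_mul, Real.exp_zero] at hconv
  have hsB : s * B = -t := by rw [hs]; field_simp
  rw [le_div_iff₀ hB]
  have h2 : Real.exp t - 1 ≤ -s * (1 - Real.exp (-B)) := by linarith
  calc (Real.exp t - 1) * B ≤ (-s * (1 - Real.exp (-B))) * B :=
        mul_le_mul_of_nonneg_right h2 hB.le
    _ = -(s * B) * (1 - Real.exp (-B)) := by ring
    _ = t * (1 - Real.exp (-B)) := by rw [hsB]; ring

set_option maxHeartbeats 1000000 in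
theorem statement17 {V : Type*} [Fintype V] {c : ℕ} (hc : 2 ≤ c)
    (Ω : V → V → ℝ) (hsymm : ∀ x y, Ω x y = Ω y x) (hnn : ∀ x y, 0 ≤ Ω x y)
    (S : ℕ → V → Fin c → ℝ)
    (hSW : ∀ k x, (∀ j, 0 < S k x j) ∧ ∑ j, S k x j = 1)
    (θ h : ℕ → ℝ)
    (hrec : ∀ k x, S (k + 1) x = liftMap (S k x) (fun j => θ k * dDir Ω (S k) (h k) x j))
    (θmin θmax : ℝ) (hθmin : 0 < θmin) (hθmax : θmin ≤ θmax)
    (hθrange : ∀ k, θ k ∈ Set.Icc θmin θmax)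
    (hhpos : ∀ k, 0 < h k)
    (hstep : ∀ k, h k * |∑ x, ∑ j, RSOm Ω (S k) x j * omApp Ω (RSOm Ω (S k)) x j|
        < frIP (S k) (RSOm Ω (S k)) (RSOm Ω (S k)))
    (hsum : Summable h)
    (c₁ : ℝ) (hc₁ : 0 < c₁ ∧ c₁ < 1)
    (harmijo : ∀ k, Jpot Ω (S (k + 1)) - Jpot Ω (S k)
        ≤ c₁ * θ k *
          frIP (S k) (gradJ Ω (S k)) (fun x => repl (S k x) (dDir Ω (S k) (h k) x)))
    (θstar : ℝ) (hθpos : 0 < θstar)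
    (hθ : Filter.Tendsto θ Filter.atTop (nhds θstar))
    (Sstar : V → Fin c → ℝ)
    (hSstar : ∀ x, (∀ j, 0 ≤ Sstar x j) ∧ ∑ j, Sstar x j = 1)
    (hlim : ∃ φ : ℕ → ℕ, StrictMono φ ∧
      Filter.Tendsto (fun n => S (φ n)) Filter.atTop (nhds Sstar))
    (hJne : ∃ x, (Jplus Ω Sstar x).Nonempty) :
    ∃ ε : ℝ, 0 < ε ∧ ∃ Mstar : ℝ, 1 < Mstar ∧ ∃ k₀ : ℕ, ∀ k, k₀ ≤ k →
      Real.sqrt (∑ x, ∑ j, (Sstar x j - S k x j) ^ 2) < ε →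
      ((∑ x, ∑ j ∈ Jplus Ω Sstar x, S (k + 1) x j)
          - (∑ x, ∑ j ∈ Jplus Ω Sstar x, S k x j)
        < (θ k / Mstar) * ∑ x, ∑ j ∈ Jplus Ω Sstar x,
            S k x j * (omApp Ω Sstar x j - ∑ i, omApp Ω Sstar x i * Sstar x i))
      ∧ (θ k / Mstar) * (∑ x, ∑ j ∈ Jplus Ω Sstar x,
            S k x j * (omApp Ω Sstar x j - ∑ i, omApp Ω Sstar x i * Sstar x i)) < 0 := by
  classical
  have hFinNe : (Finset.univ : Finset (Fin c)).Nonempty :=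
    ⟨⟨0, by omega⟩, Finset.mem_univ _⟩
  set a : V → Fin c → ℝ :=
    fun x j => omApp Ω Sstar x j - ∑ i, Sstar x i * omApp Ω Sstar x i with ha
  have hmemJ : ∀ x (j : Fin c), j ∈ Jplus Ω Sstar x ↔ a x j < 0 := by
    intro x j; simp [Jplus, ha]
  set T : Finset ((_ : V) × Fin c) :=
    Finset.univ.sigma (fun x : V => Jplus Ω Sstar x) with hT
  have hTmem : ∀ q : (_ : V) × Fin c, q ∈ T ↔ q.2 ∈ Jplus Ω Sstar q.1 := by
    intro q; simp [hT, Finset.mem_sigma]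
  obtain ⟨x₀, j₀, hj₀⟩ : ∃ x j, j ∈ Jplus Ω Sstar x := by
    obtain ⟨x, j, hj⟩ := hJne; exact ⟨x, j, hj⟩
  have hTne : T.Nonempty := ⟨⟨x₀, j₀⟩, (hTmem _).2 hj₀⟩
  set α : ℝ := T.sup' hTne (fun q => a q.1 q.2) with hαdef
  have hαneg : α < 0 := by
    rw [hαdef, Finset.sup'_lt_iff]
    exact fun q hq => (hmemJ q.1 q.2).1 ((hTmem q).1 hq)
  have hαle : ∀ x (j : Fin c), j ∈ Jplus Ω Sstar x → a x j ≤ α := by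
    intro x j hj
    exact Finset.le_sup' (f := fun q : (_ : V) × Fin c => a q.1 q.2)
      ((hTmem ⟨x, j⟩).2 hj)
  set amax : ℝ := T.sup' hTne (fun q => |a q.1 q.2|) with hamaxdef
  have hamaxle : ∀ x (j : Fin c), j ∈ Jplus Ω Sstar x → |a x j| ≤ amax := by
    intro x j hj
    exact Finset.le_sup' (f := fun q : (_ : V) × Fin c => |a q.1 q.2|)
      ((hTmem ⟨x, j⟩).2 hj)
  have hamaxpos : 0 < amax :=
    lt_of_lt_of_le (abs_pos.2 (ne_of_lt ((hmemJ x₀ j₀).1 hj₀))) (hamaxle x₀ j₀ hj₀)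
  set δ : ℝ := -α / 2 with hδdef
  have hδ : 0 < δ := by rw [hδdef]; linarith
  have hθmaxpos : 0 < θmax := lt_of_lt_of_le hθmin hθmax
  set B : ℝ := θmax * (amax + δ) with hBdef
  have hB : 0 < B := mul_pos hθmaxpos (by linarith)
  set E : ℝ := 1 - Real.exp (-B) with hEdef
  have hE : 0 < E := by
    rw [hEdef]
    have : Real.exp (-B) < Real.exp 0 := Real.exp_lt_exp.2 (by linarith)
    rw [Real.exp_zero] at this; linarith
  set Mstar : ℝ := 2 * (B / E) + 1 with hMdef
  have hBE : 0 < B / E := div_pos hB hE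
  have hMstar : 1 < Mstar := by rw [hMdef]; linarith
  have hMstarpos : 0 < Mstar := by linarith
  set K : ℝ := ∑ x, ∑ y, Ω x y with hKdef
  have hK0 : 0 ≤ K := Finset.sum_nonneg fun x _ =>
    Finset.sum_nonneg fun y _ => hnn x y
  have hKx : ∀ x, (∑ y, Ω x y) ≤ K := by
    intro x
    exact Finset.single_le_sum
      (f := fun x => ∑ y, Ω x y)
      (fun x _ => Finset.sum_nonneg fun y _ => hnn x y) (Finset.mem_univ x)
  set ε : ℝ := δ / (2 * (2 * (c : ℝ) + 1) * K + 1) with hεdef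
  have hden : 0 < 2 * (2 * (c : ℝ) + 1) * K + 1 := by positivity
  have hε : 0 < ε := div_pos hδ hden
  have hεδ : ε * (2 * (2 * (c : ℝ) + 1) * K + 1) = δ :=
    div_mul_cancel₀ _ (ne_of_gt hden)
  -- h tends to zero
  have hhev : ∀ᶠ k in atTop, h k < δ / (4 * K ^ 2 + 1) :=
    (tendsto_order.1 hsum.tendsto_atTop_zero).2 _ (by positivity)
  obtain ⟨k₀, hk₀⟩ := eventually_atTop.1 hhev
  clear_value a T α amax δ B E Mstar K ε
  refine ⟨ε, hε, Mstar, hMstar, k₀, ?_⟩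
  intro k hk hclose
  obtain ⟨hθk1, hθk2⟩ := hθrange k
  have hθkpos : 0 < θ k := lt_of_lt_of_le hθmin hθk1
  -- basic row facts
  have hpos : ∀ y i, 0 < S k y i := fun y i => (hSW k y).1 i
  have hsum1 : ∀ y, ∑ i, S k y i = 1 := fun y => (hSW k y).2
  have hle1 : ∀ y i, S k y i ≤ 1 := by
    intro y i
    calc S k y i ≤ ∑ i', S k y i' :=
          Finset.single_le_sum (fun i' _ => (hpos y i').le) (Finset.mem_univ i)
      _ = 1 := hsum1 y
  have hposs : ∀ y i, 0 ≤ Sstar y i := fun y i => (hSstar y).1 i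
  have hsum1s : ∀ y, ∑ i, Sstar y i = 1 := fun y => (hSstar y).2
  have hle1s : ∀ y i, Sstar y i ≤ 1 := by
    intro y i
    calc Sstar y i ≤ ∑ i', Sstar y i' :=
          Finset.single_le_sum (fun i' _ => hposs y i') (Finset.mem_univ i)
      _ = 1 := hsum1s y
  have tri : ∀ u v : ℝ, |u - v| ≤ |u| + |v| := by
    intro u v
    rw [sub_eq_add_neg]
    exact (abs_add_le _ _).trans (by rw [abs_neg])
  -- entrywise closeness
  have hent : ∀ y i, |S k y i - Sstar y i| ≤ ε := by
    intro y i
    have h1 : (Sstar y i - S k y i) ^ 2 ≤ ∑ x, ∑ j, (Sstar x j - S k x j) ^ 2 := by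
      calc (Sstar y i - S k y i) ^ 2 ≤ ∑ j, (Sstar y j - S k y j) ^ 2 :=
            Finset.single_le_sum (f := fun j => (Sstar y j - S k y j) ^ 2)
              (fun j _ => sq_nonneg _) (Finset.mem_univ i)
        _ ≤ ∑ x, ∑ j, (Sstar x j - S k x j) ^ 2 :=
            Finset.single_le_sum
              (f := fun x => ∑ j, (Sstar x j - S k x j) ^ 2)
              (fun x _ => Finset.sum_nonneg fun j _ => sq_nonneg _)
              (Finset.mem_univ y)
    have h2 : |Sstar y i - S k y i| ≤ Real.sqrt (∑ x, ∑ j, (Sstar x j - S k x j) ^ 2) := by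
      rw [← Real.sqrt_sq_eq_abs]
      exact Real.sqrt_le_sqrt h1
    rw [abs_sub_comm]
    exact h2.trans hclose.le
  -- omApp bounds
  have hOm : ∀ (D : V → Fin c → ℝ) (e : ℝ), 0 ≤ e → (∀ y i, |D y i| ≤ e) →
      ∀ x j, |omApp Ω D x j| ≤ K * e := by
    intro D e he hD x j
    calc |omApp Ω D x j| ≤ ∑ y, |Ω x y * D y j| := Finset.abs_sum_le_sum_abs _ _
      _ ≤ ∑ y, Ω x y * e := Finset.sum_le_sum (fun y _ => by
          rw [abs_mul, abs_of_nonneg (hnn x y)]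
          exact mul_le_mul_of_nonneg_left (hD y j) (hnn x y))
      _ = (∑ y, Ω x y) * e := by rw [Finset.sum_mul]
      _ ≤ K * e := mul_le_mul_of_nonneg_right (hKx x) he
  have hOmS : ∀ x j, |omApp Ω (S k) x j| ≤ K := by
    intro x j
    have := hOm (S k) 1 zero_le_one
      (fun y i => by rw [abs_of_pos (hpos y i)]; exact hle1 y i) x j
    simpa using this
  have hOmdiff : ∀ x j, |omApp Ω (S k) x j - omApp Ω Sstar x j| ≤ K * ε := by
    intro x j
    have hlin : omApp Ω (S k) x j - omApp Ω Sstar x j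
        = omApp Ω (fun y i => S k y i - Sstar y i) x j := by
      simp [omApp, mul_sub, Finset.sum_sub_distrib]
    rw [hlin]
    exact hOm _ ε hε.le hent x j
  have hinner : ∀ (u : V → Fin c → ℝ) (e : ℝ), 0 ≤ e → (∀ x i, |u x i| ≤ e) →
      ∀ x, |∑ i, S k x i * u x i| ≤ e := by
    intro u e he hu x
    calc |∑ i, S k x i * u x i| ≤ ∑ i, |S k x i * u x i| :=
          Finset.abs_sum_le_sum_abs _ _
      _ ≤ ∑ i, S k x i * e := Finset.sum_le_sum (fun i _ => by
          rw [abs_mul, abs_of_pos (hpos x i)]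
          exact mul_le_mul_of_nonneg_left (hu x i) (hpos x i).le)
      _ = (∑ i, S k x i) * e := by rw [Finset.sum_mul]
      _ = e := by rw [hsum1 x, one_mul]
  have hinnerS : ∀ x, |∑ i, S k x i * omApp Ω (S k) x i| ≤ K :=
    hinner _ K hK0 hOmS
  have hR : ∀ y i, |RSOm Ω (S k) y i| ≤ 2 * K := by
    intro y i
    simp only [RSOm, repl]
    have h1 : |S k y i * omApp Ω (S k) y i| ≤ K := by
      rw [abs_mul, abs_of_pos (hpos y i)]
      calc S k y i * |omApp Ω (S k) y i| ≤ 1 * K :=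
            mul_le_mul (hle1 y i) (hOmS y i) (abs_nonneg _) zero_le_one
        _ = K := one_mul K
    have h2 : |(∑ i', S k y i' * omApp Ω (S k) y i') * S k y i| ≤ K := by
      rw [abs_mul, abs_of_pos (hpos y i)]
      calc |∑ i', S k y i' * omApp Ω (S k) y i'| * S k y i ≤ K * 1 :=
            mul_le_mul (hinnerS y) (hle1 y i) (hpos y i).le hK0
        _ = K := mul_one K
    exact (tri _ _).trans (by linarith)
  have hOmR : ∀ x j, |omApp Ω (RSOm Ω (S k)) x j| ≤ K * (2 * K) :=
    hOm _ (2 * K) (by positivity) hR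
  have hinnerR : ∀ x, |∑ i, S k x i * omApp Ω (RSOm Ω (S k)) x i| ≤ K * (2 * K) :=
    hinner _ (K * (2 * K)) (by positivity) hOmR
  -- inner products difference
  have hip : ∀ x, |(∑ i, S k x i * omApp Ω (S k) x i)
      - ∑ i, Sstar x i * omApp Ω Sstar x i| ≤ (c : ℝ) * (2 * K * ε) := by
    intro x
    have hterm : ∀ i : Fin c,
        |S k x i * omApp Ω (S k) x i - Sstar x i * omApp Ω Sstar x i| ≤ 2 * K * ε := by
      intro i
      have expand : S k x i * omApp Ω (S k) x i - Sstar x i * omApp Ω Sstar x i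
          = (S k x i - Sstar x i) * omApp Ω (S k) x i
            + Sstar x i * (omApp Ω (S k) x i - omApp Ω Sstar x i) := by ring
      rw [expand]
      have b1 : |(S k x i - Sstar x i) * omApp Ω (S k) x i| ≤ ε * K := by
        rw [abs_mul]
        exact mul_le_mul (hent x i) (hOmS x i) (abs_nonneg _) hε.le
      have b2 : |Sstar x i * (omApp Ω (S k) x i - omApp Ω Sstar x i)| ≤ 1 * (K * ε) := by
        rw [abs_mul, abs_of_nonneg (hposs x i)]
        exact mul_le_mul (hle1s x i) (hOmdiff x i) (abs_nonneg _) zero_le_one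
      calc |(S k x i - Sstar x i) * omApp Ω (S k) x i
            + Sstar x i * (omApp Ω (S k) x i - omApp Ω Sstar x i)|
          ≤ |(S k x i - Sstar x i) * omApp Ω (S k) x i|
            + |Sstar x i * (omApp Ω (S k) x i - omApp Ω Sstar x i)| := abs_add_le _ _
        _ ≤ 2 * K * ε := by linarith
    calc |(∑ i, S k x i * omApp Ω (S k) x i) - ∑ i, Sstar x i * omApp Ω Sstar x i|
        = |∑ i, (S k x i * omApp Ω (S k) x i - Sstar x i * omApp Ω Sstar x i)| := by
          rw [Finset.sum_sub_distrib]
      _ ≤ ∑ i, |S k x i * omApp Ω (S k) x i - Sstar x i * omApp Ω Sstar x i| :=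
          Finset.abs_sum_le_sum_abs _ _
      _ ≤ ∑ _i : Fin c, 2 * K * ε := Finset.sum_le_sum (fun i _ => hterm i)
      _ = (c : ℝ) * (2 * K * ε) := by
          rw [Finset.sum_const, Finset.card_univ, Fintype.card_fin, nsmul_eq_mul]
  -- the shifted direction
  set att : V → Fin c → ℝ := fun x j =>
    (omApp Ω (S k) x j + h k / 2 * omApp Ω (RSOm Ω (S k)) x j)
    - ∑ i, S k x i * (omApp Ω (S k) x i + h k / 2 * omApp Ω (RSOm Ω (S k)) x i)
    with hattdef
  clear_value att
  have hclose_at : ∀ x j, |att x j - a x j| ≤ δ := by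
    intro x j
    have hsplitsum : ∑ i, S k x i * (omApp Ω (S k) x i
          + h k / 2 * omApp Ω (RSOm Ω (S k)) x i)
        = (∑ i, S k x i * omApp Ω (S k) x i)
          + h k / 2 * ∑ i, S k x i * omApp Ω (RSOm Ω (S k)) x i := by
      rw [Finset.mul_sum, ← Finset.sum_add_distrib]
      exact Finset.sum_congr rfl (fun i _ => by ring)
    have hsplit : att x j - a x j =
        (omApp Ω (S k) x j - omApp Ω Sstar x j)
        - ((∑ i, S k x i * omApp Ω (S k) x i) - ∑ i, Sstar x i * omApp Ω Sstar x i)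
        + (h k / 2) * (omApp Ω (RSOm Ω (S k)) x j
            - ∑ i, S k x i * omApp Ω (RSOm Ω (S k)) x i) := by
      simp only [hattdef, ha]
      rw [hsplitsum]; ring
    have b1 := hOmdiff x j
    have b2 := hip x
    have b3 : |(h k / 2) * (omApp Ω (RSOm Ω (S k)) x j
        - ∑ i, S k x i * omApp Ω (RSOm Ω (S k)) x i)| ≤ h k / 2 * (4 * K ^ 2) := by
      rw [abs_mul, abs_of_pos (by linarith [hhpos k] : (0:ℝ) < h k / 2)]
      apply mul_le_mul_of_nonneg_left _ (by linarith [hhpos k] : (0:ℝ) ≤ h k / 2)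
      have := tri (omApp Ω (RSOm Ω (S k)) x j)
        (∑ i, S k x i * omApp Ω (RSOm Ω (S k)) x i)
      have hb1 := hOmR x j
      have hb2 := hinnerR x
      have hKK : K * (2 * K) + K * (2 * K) = 4 * K ^ 2 := by ring
      linarith only [this, hb1, hb2, hKK]
    have habs : |att x j - a x j| ≤ K * ε + (c : ℝ) * (2 * K * ε) + h k / 2 * (4 * K ^ 2) := by
      rw [hsplit]
      have t1 := abs_add_le
        ((omApp Ω (S k) x j - omApp Ω Sstar x j)
          - ((∑ i, S k x i * omApp Ω (S k) x i) - ∑ i, Sstar x i * omApp Ω Sstar x i))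
        ((h k / 2) * (omApp Ω (RSOm Ω (S k)) x j
            - ∑ i, S k x i * omApp Ω (RSOm Ω (S k)) x i))
      have t2 := tri (omApp Ω (S k) x j - omApp Ω Sstar x j)
        ((∑ i, S k x i * omApp Ω (S k) x i) - ∑ i, Sstar x i * omApp Ω Sstar x i)
      linarith
    have hεpart : K * ε + (c : ℝ) * (2 * K * ε) ≤ δ / 2 := by nlinarith [hε.le, hK0]
    have hhk := hk₀ k hk
    have hhpart : h k / 2 * (4 * K ^ 2) ≤ δ / 2 := by
      have h4 : (0:ℝ) < 4 * K ^ 2 + 1 := by positivity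
      have := (lt_div_iff₀ h4).1 hhk
      nlinarith [hhpos k]
    linarith
  -- per-term key estimate
  have key1 : ∀ x, ∀ j ∈ Jplus Ω Sstar x,
      S (k + 1) x j - S k x j ≤ S k x j * (θ k * att x j * (E / B)) := by
    intro x j hj
    set v : Fin c → ℝ := fun i => θ k * dDir Ω (S k) (h k) x i with hv
    have hZpos : 0 < ∑ i, S k x i * Real.exp (v i) :=
      Finset.sum_pos (fun i _ => mul_pos (hpos x i) (Real.exp_pos _)) hFinNe
    have hJensen : Real.exp (∑ i, S k x i * v i) ≤ ∑ i, S k x i * Real.exp (v i) := by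
      have := convexOn_exp.map_sum_le (t := Finset.univ) (w := S k x) (p := v)
        (fun i _ => (hpos x i).le) (hsum1 x) (fun i _ => Set.mem_univ _)
      simpa [smul_eq_mul] using this
    have gen : ∀ (b : Fin c → ℝ) (m : ℝ),
        θ k * (b j - m) - ∑ i, S k x i * (θ k * (b i - m))
        = θ k * (b j - ∑ i, S k x i * b i) := by
      intro b m
      have h1 : ∑ i, S k x i * (θ k * (b i - m))
          = θ k * (∑ i, S k x i * b i) - θ k * m * ∑ i, S k x i := by
        calc ∑ i, S k x i * (θ k * (b i - m))
            = ∑ i, (θ k * (S k x i * b i) - θ k * m * S k x i) :=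
              Finset.sum_congr rfl (fun i _ => by ring)
          _ = (∑ i, θ k * (S k x i * b i)) - ∑ i, θ k * m * S k x i :=
              Finset.sum_sub_distrib _ _
          _ = θ k * (∑ i, S k x i * b i) - θ k * m * ∑ i, S k x i := by
              rw [← Finset.mul_sum, ← Finset.mul_sum]
      rw [h1, hsum1 x]; ring
    have ht_eq : v j - ∑ i, S k x i * v i = θ k * att x j := by
      simp only [hv, hattdef, dDir, proj0]
      exact gen (fun i => omApp Ω (S k) x i + h k / 2 * omApp Ω (RSOm Ω (S k)) x i)
        ((∑ i, (omApp Ω (S k) x i + h k / 2 * omApp Ω (RSOm Ω (S k)) x i)) / (c : ℝ))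
    have hupd : S (k + 1) x j
        = S k x j * Real.exp (v j) / (∑ i, S k x i * Real.exp (v i)) := by
      rw [hrec k x]; rfl
    have hstep1 : S (k + 1) x j ≤ S k x j * Real.exp (v j - ∑ i, S k x i * v i) := by
      rw [hupd, Real.exp_sub, mul_div_assoc]
      apply mul_le_mul_of_nonneg_left _ (hpos x j).le
      apply div_le_div_of_nonneg_left (Real.exp_pos _).le (Real.exp_pos _) hJensen
    -- bounds on t := θ k * att x j
    have hta := hclose_at x j
    have haJ : a x j < 0 := (hmemJ x j).1 hj
    have haα : a x j ≤ α := hαle x j hj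
    have habsa : |a x j| ≤ amax := hamaxle x j hj
    have hub : att x j ≤ a x j + δ := by linarith [(abs_le.1 hta).2]
    have hlb : -(amax + δ) ≤ att x j := by
      have := (abs_le.1 hta).1
      have := (abs_le.1 habsa).1
      linarith
    have ht0 : θ k * att x j ≤ 0 := by
      have hattneg : att x j ≤ 0 := by
        have : α + δ = α / 2 := by rw [hδdef]; ring
        linarith
      exact mul_nonpos_of_nonneg_of_nonpos hθkpos.le hattneg
    have htB : -B ≤ θ k * att x j := by
      calc -B = θmax * (-(amax + δ)) := by rw [hBdef]; ring
        _ ≤ θ k * (-(amax + δ)) :=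
            mul_le_mul_of_nonpos_right hθk2 (by linarith)
        _ ≤ θ k * att x j := mul_le_mul_of_nonneg_left hlb hθkpos.le
    have hexp : Real.exp (θ k * att x j) - 1 ≤ θ k * att x j * (E / B) := by
      have := exp_lin_aux hB ht0 htB
      rw [hEdef, ← mul_div_assoc]
      exact this
    calc S (k + 1) x j - S k x j
        ≤ S k x j * Real.exp (θ k * att x j) - S k x j := by
          rw [← ht_eq]; linarith [hstep1]
      _ = S k x j * (Real.exp (θ k * att x j) - 1) := by ring
      _ ≤ S k x j * (θ k * att x j * (E / B)) :=
          mul_le_mul_of_nonneg_left hexp (hpos x j).le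
  -- the key negative sum
  obtain ⟨A, hAdef⟩ : ∃ A : ℝ, A = ∑ x, ∑ j ∈ Jplus Ω Sstar x, S k x j * a x j :=
    ⟨_, rfl⟩
  have hAneg : A < 0 := by
    have hxterm : ∀ x, ∑ j ∈ Jplus Ω Sstar x, S k x j * a x j ≤ 0 := by
      intro x
      apply Finset.sum_nonpos
      intro j hj
      exact mul_nonpos_of_nonneg_of_nonpos (hpos x j).le ((hmemJ x j).1 hj).le
    have hx0term : ∑ j ∈ Jplus Ω Sstar x₀, S k x₀ j * a x₀ j < 0 := by
      have : ∑ j ∈ Jplus Ω Sstar x₀, S k x₀ j * a x₀ j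
          < ∑ j ∈ Jplus Ω Sstar x₀, (0:ℝ) :=
        Finset.sum_lt_sum_of_nonempty ⟨j₀, hj₀⟩
          (fun j hj => mul_neg_of_pos_of_neg (hpos x₀ j) ((hmemJ x₀ j).1 hj))
      simpa using this
    rw [hAdef]
    have : (∑ x, ∑ j ∈ Jplus Ω Sstar x, S k x j * a x j) < ∑ _x : V, (0:ℝ) :=
      Finset.sum_lt_sum (fun x _ => hxterm x) ⟨x₀, Finset.mem_univ x₀, hx0term⟩
    simpa using this
  -- sum-level bound
  obtain ⟨P, hPdef⟩ : ∃ P : ℝ, P = ∑ x, ∑ j ∈ Jplus Ω Sstar x, S k x j :=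
    ⟨_, rfl⟩
  have hP0 : 0 ≤ P := by
    rw [hPdef]
    exact Finset.sum_nonneg fun x _ => Finset.sum_nonneg fun j _ => (hpos x j).le
  have hPa : A ≤ α * P := by
    rw [hAdef, hPdef, Finset.mul_sum]
    apply Finset.sum_le_sum
    intro x _
    rw [Finset.mul_sum]
    apply Finset.sum_le_sum
    intro j hj
    calc S k x j * a x j ≤ S k x j * α :=
          mul_le_mul_of_nonneg_left (hαle x j hj) (hpos x j).le
      _ = α * S k x j := mul_comm _ _
  have hsumat : ∑ x, ∑ j ∈ Jplus Ω Sstar x, S k x j * att x j ≤ A / 2 := by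
    have step2 : ∑ x, ∑ j ∈ Jplus Ω Sstar x, S k x j * att x j
        ≤ ∑ x, ∑ j ∈ Jplus Ω Sstar x, S k x j * (a x j + δ) := by
      apply Finset.sum_le_sum; intro x _
      apply Finset.sum_le_sum; intro j hj
      apply mul_le_mul_of_nonneg_left _ (hpos x j).le
      linarith [(abs_le.1 (hclose_at x j)).2]
    have step3 : ∑ x, ∑ j ∈ Jplus Ω Sstar x, S k x j * (a x j + δ) = A + δ * P := by
      rw [hAdef, hPdef, Finset.mul_sum, ← Finset.sum_add_distrib]
      apply Finset.sum_congr rfl; intro x _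
      rw [Finset.mul_sum, ← Finset.sum_add_distrib]
      apply Finset.sum_congr rfl; intro j _
      ring
    have hδP : δ * P ≤ -A / 2 := by
      have : δ * P = -(α * P) / 2 := by rw [hδdef]; ring
      linarith
    linarith
  have main : (∑ x, ∑ j ∈ Jplus Ω Sstar x, S (k + 1) x j)
      - (∑ x, ∑ j ∈ Jplus Ω Sstar x, S k x j)
      ≤ θ k * (E / B) * (A / 2) := by
    have hdiff : (∑ x, ∑ j ∈ Jplus Ω Sstar x, S (k + 1) x j)
        - (∑ x, ∑ j ∈ Jplus Ω Sstar x, S k x j)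
        = ∑ x, ∑ j ∈ Jplus Ω Sstar x, (S (k + 1) x j - S k x j) := by
      rw [← Finset.sum_sub_distrib]
      exact Finset.sum_congr rfl (fun x _ => by rw [← Finset.sum_sub_distrib])
    rw [hdiff]
    calc ∑ x, ∑ j ∈ Jplus Ω Sstar x, (S (k + 1) x j - S k x j)
        ≤ ∑ x, ∑ j ∈ Jplus Ω Sstar x, S k x j * (θ k * att x j * (E / B)) :=
          Finset.sum_le_sum (fun x _ => Finset.sum_le_sum (key1 x))
      _ = θ k * (E / B) * ∑ x, ∑ j ∈ Jplus Ω Sstar x, S k x j * att x j := by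
          rw [Finset.mul_sum]
          apply Finset.sum_congr rfl; intro x _
          rw [Finset.mul_sum]
          apply Finset.sum_congr rfl; intro j _
          ring
      _ ≤ θ k * (E / B) * (A / 2) :=
          mul_le_mul_of_nonneg_left hsumat
            (mul_nonneg hθkpos.le (div_pos hE hB).le)
  have hAeq : (∑ x, ∑ j ∈ Jplus Ω Sstar x,
      S k x j * (omApp Ω Sstar x j - ∑ i, omApp Ω Sstar x i * Sstar x i)) = A := by
    rw [hAdef]
    apply Finset.sum_congr rfl; intro x _
    apply Finset.sum_congr rfl; intro j _
    have hcomm : ∑ i, omApp Ω Sstar x i * Sstar x i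
        = ∑ i, Sstar x i * omApp Ω Sstar x i :=
      Finset.sum_congr rfl (fun i _ => mul_comm _ _)
    rw [ha, hcomm]
  have h1 : 1 / Mstar < E / (2 * B) := by
    have hEB2 : E * (B / E) = B := by field_simp
    rw [div_lt_div_iff₀ hMstarpos (by linarith)]
    have hexpand : E * Mstar = 2 * (E * (B / E)) + E := by rw [hMdef]; ring
    rw [hexpand, hEB2]
    linarith
  constructor
  · rw [hAeq]
    refine lt_of_le_of_lt main ?_
    have hθA : θ k * A < 0 := mul_neg_of_pos_of_neg hθkpos hAneg
    have h2 := mul_lt_mul_of_neg_left h1 hθA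
    calc θ k * (E / B) * (A / 2) = θ k * A * (E / (2 * B)) := by ring
      _ < θ k * A * (1 / Mstar) := h2
      _ = θ k / Mstar * A := by ring
  · rw [hAeq]
    exact mul_neg_of_pos_of_neg (div_pos hθkpos hMstarpos) hAneg
end
end

section
/- Let V be a finite set, c ≥ 2, Ω : V×V → ℝ symmetric with 0 ≤ Ω(x,y) ≤ 1. Let (S^k) ⊂ W be defined by S^{k+1} = exp_{S^k}(θ_k·d(S^k,h_k)) with θ_k ∈ [θ_min, θ_max] ⊂ (0,∞) and h_k ≥ 0, h̄ = sup_k h_k < ∞. Let S* ∈ W̄ be integral, S*(x) = e_{j*(x)} for each x ∈ V, and satisfy the stability condition (ΩS*)_j(x) < (ΩS*)_{j*(x)}(x) for all x ∈ V and all j ≠ j*(x). Set ρ* = max_{S∈W̄} max_{x∈V, j≠j*(x)} ((ΩS)_{j*(x)}(x) − (ΩS)_j(x)), N = max_{y∈V} |{z ∈ V : Ω(y,z) > 0}|, C = h̄·c·N, and ε* = min_{x∈V} min_{j≠j*(x)} 2·((ΩS*)_{j*(x)}(x) − (ΩS*)_j(x)) / (Σ_{y∈V}Ω(x,y) + (ΩS*)_{j*(x)}(x)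 − (ΩS*)_j(x)). Then for every ε > 0 with ε ≤ ε* and ε ≤ min_{x∈V} min_{j≠j*(x)} 2·((ΩS*)_{j*(x)}(x) − (ΩS*)_j(x)) / (1 + C·ρ* + (ΩS*)_{j*(x)}(x) − (ΩS*)_j(x)), the following holds: if max_{x∈V} ‖S^{k₀}(x) − S*(x)‖₁ < ε for some index k₀, then there exists ξ : V → (0,1) such that ‖S^k(x) − S*(x)‖₁ < ξ(x)^{k−k₀}·‖S^{k₀}(x) − S*(x)‖₁ for all k > k₀ and all x ∈ V; in particular the convergence S^k → S* is locally linear. -/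
open Finset Filter Topology

noncomputable section

variable {V : Type*} [Fintype V] {c : ℕ}

section AuxLemmas




lemma aux_sum_erase (p : Fin c → ℝ) (hs : ∑ i, p i = 1) (m : Fin c) :
    ∑ i ∈ Finset.univ.erase m, p i = 1 - p m := by
  rw [Finset.sum_erase_eq_sub (Finset.mem_univ m), hs]

lemma aux_T_nonneg (p : Fin c → ℝ) (hp : ∀ i, 0 ≤ p i) (hs : ∑ i, p i = 1) (m : Fin c) :
    0 ≤ 1 - p m := by
  rw [← aux_sum_erase p hs m]
  exact Finset.sum_nonneg fun i _ => hp i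

lemma aux_pi_le (p : Fin c → ℝ) (hp : ∀ i, 0 ≤ p i) (hs : ∑ i, p i = 1) {m i : Fin c}
    (him : i ≠ m) : p i ≤ 1 - p m := by
  rw [← aux_sum_erase p hs m]
  exact Finset.single_le_sum (fun j _ => hp j) (Finset.mem_erase.2 ⟨him, Finset.mem_univ i⟩)

lemma aux_pm_le_one (p : Fin c → ℝ) (hp : ∀ i, 0 ≤ p i) (hs : ∑ i, p i = 1) (m : Fin c) :
    p m ≤ 1 := by
  nlinarith [aux_T_nonneg p hp hs m]

lemma aux_l1_eq (p : Fin c → ℝ) (hp : ∀ i, 0 ≤ p i) (hs : ∑ i, p i = 1) (m : Fin c) :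
    ∑ j, |p j - (if j = m then (1:ℝ) else 0)| = 2 * (1 - p m) := by
  rw [← Finset.add_sum_erase Finset.univ _ (Finset.mem_univ m)]
  have h1 : |p m - (if m = m then (1:ℝ) else 0)| = 1 - p m := by
    rw [if_pos rfl, abs_of_nonpos (by linarith [aux_pm_le_one p hp hs m])]; ring
  have h2 : ∑ j ∈ Finset.univ.erase m, |p j - (if j = m then (1:ℝ) else 0)| =
      ∑ j ∈ Finset.univ.erase m, p j := by
    apply Finset.sum_congr rfl
    intro j hj
    rw [if_neg (Finset.mem_erase.1 hj).1, sub_zero, abs_of_nonneg (hp j)]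
  rw [h1, h2, aux_sum_erase p hs m]; ring


lemma aux_perZ (p : Fin c → ℝ) (hp : ∀ i, 0 ≤ p i) (hs : ∑ i, p i = 1)
    (m a b : Fin c) (hab : a ≠ b) :
    ((if m = a then (1:ℝ) else 0) - (if m = b then (1:ℝ) else 0))
      - (1 - p m) * (1 + ((if m = a then (1:ℝ) else 0) - (if m = b then (1:ℝ) else 0)))
      ≤ p a - p b := by
  rcases eq_or_ne m a with rfl | hma
  · have hmb : m ≠ b := hab
    rw [if_pos rfl, if_neg hmb]
    have hb : p b ≤ 1 - p m := aux_pi_le p hp hs (Ne.symm hmb)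
    linarith
  · rcases eq_or_ne m b with rfl | hmb
    · rw [if_neg hma, if_pos rfl]
      have h1 := hp a
      have h2 := aux_pm_le_one p hp hs m
      linarith
    · rw [if_neg hma, if_neg hmb]
      have hb : p b ≤ 1 - p m := aux_pi_le p hp hs (Ne.symm hmb)
      have h1 := hp a
      linarith

lemma aux_perY (p u : Fin c → ℝ) (hp : ∀ i, 0 ≤ p i) (hs : ∑ i, p i = 1)
    (m a b : Fin c) (hab : a ≠ b)
    (rho h : ℝ) (hrho : 0 ≤ rho) (hh : 0 ≤ h)
    (hG1 : ∀ i, u i ≤ u m) (hG2 : ∀ i, u m - u i ≤ rho)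
    (K : ℝ) (hK0 : 0 ≤ K) (hKbig : h * rho ≤ 2 ∨ K = h * rho) :
    ((if m = a then (1:ℝ) else 0) - (if m = b then (1:ℝ) else 0))
      - (1 - p m) * (1 + ((if m = a then (1:ℝ) else 0) - (if m = b then (1:ℝ) else 0)))
      - (1 - p m) * K
      ≤ (p a - p b) + (h / 2) * (repl p u a - repl p u b) := by
  set ip : ℝ := ∑ i, p i * u i with hip
  have hrepl : ∀ i, repl p u i = p i * (u i - ip) := by
    intro i; simp only [repl, hip]; ring
  have hsum : ∑ i, p i * (u m - u i) = u m - ip := by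
    have : ∑ i, p i * (u m - u i) = (∑ i, p i) * u m - ∑ i, p i * u i := by
      rw [Finset.sum_mul, ← Finset.sum_sub_distrib]
      exact Finset.sum_congr rfl fun i _ => by ring
    rw [this, hs, one_mul, hip]
  have hTge : 0 ≤ 1 - p m := aux_T_nonneg p hp hs m
  have humip0 : 0 ≤ u m - ip := by
    rw [← hsum]
    exact Finset.sum_nonneg fun i _ => mul_nonneg (hp i) (by linarith [hG1 i])
  have humipT : u m - ip ≤ (1 - p m) * rho := by
    rw [← hsum, ← Finset.add_sum_erase Finset.univ _ (Finset.mem_univ m)]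
    have h0 : p m * (u m - u m) = 0 := by ring
    rw [h0, zero_add]
    calc ∑ i ∈ Finset.univ.erase m, p i * (u m - u i)
        ≤ ∑ i ∈ Finset.univ.erase m, p i * rho :=
          Finset.sum_le_sum fun i _ => mul_le_mul_of_nonneg_left (hG2 i) (hp i)
      _ = (1 - p m) * rho := by rw [← Finset.sum_mul, aux_sum_erase p hs m]
  -- lower bound for repl at any index
  have hRlow : ∀ i, -(p i * rho) ≤ repl p u i := by
    intro i
    rw [hrepl i]
    have h1 : -rho ≤ u i - ip := by
      have := hG2 i
      linarith
    calc -(p i * rho) = p i * (-rho) := by ring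
      _ ≤ p i * (u i - ip) := mul_le_mul_of_nonneg_left h1 (hp i)
  -- upper bound for repl at m
  have hRm : repl p u m ≤ (1 - p m) * rho := by
    rw [hrepl m]
    have h1 : p m * (u m - ip) ≤ 1 * (u m - ip) :=
      mul_le_mul_of_nonneg_right (aux_pm_le_one p hp hs m) humip0
    linarith
  -- fine upper bound for repl at i ≠ m
  have hRfine : ∀ i, i ≠ m → repl p u i ≤ p i * (((1 - p m) - p i) * rho) := by
    intro i him
    rw [hrepl i]
    have hmem : i ∈ Finset.univ.erase m := Finset.mem_erase.2 ⟨him, Finset.mem_univ i⟩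
    have hsplit : ∑ j ∈ Finset.univ.erase m, p j * (u m - u j)
        = p i * (u m - u i) + ∑ j ∈ (Finset.univ.erase m).erase i, p j * (u m - u j) :=
      (Finset.add_sum_erase _ _ hmem).symm
    have hrest : ∑ j ∈ (Finset.univ.erase m).erase i, p j * (u m - u j)
        ≤ ((1 - p m) - p i) * rho := by
      calc ∑ j ∈ (Finset.univ.erase m).erase i, p j * (u m - u j)
          ≤ ∑ j ∈ (Finset.univ.erase m).erase i, p j * rho :=
            Finset.sum_le_sum fun j _ => mul_le_mul_of_nonneg_left (hG2 j) (hp j)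
        _ = (∑ j ∈ (Finset.univ.erase m).erase i, p j) * rho := by rw [Finset.sum_mul]
        _ = ((1 - p m) - p i) * rho := by
            rw [Finset.sum_erase_eq_sub hmem, aux_sum_erase p hs m]
    have humip' : u m - ip ≤ p i * (u m - u i) + ((1 - p m) - p i) * rho := by
      rw [← hsum, ← Finset.add_sum_erase Finset.univ _ (Finset.mem_univ m)]
      have h0 : p m * (u m - u m) = 0 := by ring
      rw [h0, zero_add, hsplit]
      linarith
    have hui : u i - ip ≤ ((1 - p m) - p i) * rho := by
      have h2 : u m - u i ≥ 0 := by linarith [hG1 i]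
      have h3 : p i ≤ 1 := aux_pm_le_one p hp hs i
      nlinarith
    exact mul_le_mul_of_nonneg_left hui (hp i)
  -- case analysis
  have hh2 : (0:ℝ) ≤ h / 2 := by linarith
  have hhr : (0:ℝ) ≤ h * rho / 2 := by positivity
  have hTa : p a ≤ 1 := aux_pm_le_one p hp hs a
  have hTb : p b ≤ 1 := aux_pm_le_one p hp hs b
  have hpa0 := hp a
  have hpb0 := hp b
  rcases eq_or_ne m a with rfl | hma
  · -- m = a
    have hmb : m ≠ b := hab
    rw [if_pos rfl, if_neg hmb]
    have hbm : b ≠ m := Ne.symm hmb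
    have hpb : p b ≤ 1 - p m := aux_pi_le p hp hs hbm
    have hRa : 0 ≤ repl p u m := by
      rw [hrepl m]; exact mul_nonneg (hp m) humip0
    have hσ : 0 ≤ (1 - p m) - p b := by linarith
    have f1 : 0 ≤ (h/2) * repl p u m := mul_nonneg hh2 hRa
    have f2 : (h/2) * repl p u b ≤ (h/2) * (p b * (((1 - p m) - p b) * rho)) :=
      mul_le_mul_of_nonneg_left (hRfine b hbm) hh2
    have hbσ0 : 0 ≤ p b * ((1 - p m) - p b) := mul_nonneg (hp b) hσ
    have hbσ : p b * ((1 - p m) - p b) ≤ (1 - p m) - p b := by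
      calc p b * ((1 - p m) - p b) ≤ 1 * ((1 - p m) - p b) :=
            mul_le_mul_of_nonneg_right hTb hσ
        _ = (1 - p m) - p b := one_mul _
    have hid : (h/2) * (p b * (((1 - p m) - p b) * rho))
        = (h * rho / 2) * (p b * ((1 - p m) - p b)) := by ring
    have hTK : 0 ≤ (1 - p m) * K := mul_nonneg hTge hK0
    rcases hKbig with hlow | hKeq
    · have e2 : h * rho / 2 ≤ 1 := by linarith
      have hd : (h/2) * (p b * (((1 - p m) - p b) * rho)) ≤ (1 - p m) - p b := by
        rw [hid]
        calc (h * rho / 2) * (p b * ((1 - p m) - p b))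
            ≤ 1 * (p b * ((1 - p m) - p b)) := mul_le_mul_of_nonneg_right e2 hbσ0
          _ ≤ (1 - p m) - p b := by linarith
      linarith
    · have hbσ2 : p b * ((1 - p m) - p b) ≤ (1 - p m) := by linarith
      have hd : (h/2) * (p b * (((1 - p m) - p b) * rho)) ≤ (1 - p m) * K := by
        rw [hid, hKeq]
        calc (h * rho / 2) * (p b * ((1 - p m) - p b))
            ≤ (h * rho / 2) * (1 - p m) := mul_le_mul_of_nonneg_left hbσ2 hhr
          _ ≤ (1 - p m) * (h * rho) := by nlinarith
      linarith
  · rcases eq_or_ne m b with rfl | hmb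
    · -- m = b
      rw [if_neg hma, if_pos rfl]
      have ham : a ≠ m := Ne.symm hma
      have hpa : p a ≤ 1 - p m := aux_pi_le p hp hs ham
      have f1 : (h/2) * (-(p a * rho)) ≤ (h/2) * repl p u a :=
        mul_le_mul_of_nonneg_left (hRlow a) hh2
      have f2 : (h/2) * repl p u m ≤ (h/2) * ((1 - p m) * rho) :=
        mul_le_mul_of_nonneg_left hRm hh2
      have hTm1 : p m ≤ 1 := aux_pm_le_one p hp hs m
      have hTK : 0 ≤ (1 - p m) * K := mul_nonneg hTge hK0
      rcases hKbig with hlow | hKeq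
      · have e2 : h * rho / 2 ≤ 1 := by linarith
        have hd1 : (h/2) * (p a * rho) ≤ p a := by
          have e : (h/2) * (p a * rho) = (h * rho / 2) * p a := by ring
          rw [e]
          calc (h * rho / 2) * p a ≤ 1 * p a := mul_le_mul_of_nonneg_right e2 (hp a)
            _ = p a := one_mul _
        have hd2 : (h/2) * ((1 - p m) * rho) ≤ (1 - p m) := by
          have e : (h/2) * ((1 - p m) * rho) = (h * rho / 2) * (1 - p m) := by ring
          rw [e]
          calc (h * rho / 2) * (1 - p m) ≤ 1 * (1 - p m) :=
                mul_le_mul_of_nonneg_right e2 hTge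
            _ = 1 - p m := one_mul _
        linarith
      · have hd : (h/2) * (p a * rho) + (h/2) * ((1 - p m) * rho) ≤ (1 - p m) * K := by
          rw [hKeq]
          have e1 : (h/2) * (p a * rho) + (h/2) * ((1 - p m) * rho)
              = (h * rho / 2) * (p a + (1 - p m)) := by ring
          rw [e1]
          calc (h * rho / 2) * (p a + (1 - p m))
              ≤ (h * rho / 2) * (2 * (1 - p m)) :=
                mul_le_mul_of_nonneg_left (by linarith) hhr
            _ = (1 - p m) * (h * rho) := by ring
        linarith
    · -- m ∉ {a, b}
      rw [if_neg hma, if_neg hmb]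
      have hbm : b ≠ m := Ne.symm hmb
      have ham : a ≠ m := Ne.symm hma
      have hpa : p a ≤ 1 - p m := aux_pi_le p hp hs ham
      have hpb : p b ≤ 1 - p m := aux_pi_le p hp hs hbm
      have hσ : 0 ≤ (1 - p m) - p b := by linarith
      have f1 : (h/2) * (-(p a * rho)) ≤ (h/2) * repl p u a :=
        mul_le_mul_of_nonneg_left (hRlow a) hh2
      have f2 : (h/2) * repl p u b ≤ (h/2) * (p b * (((1 - p m) - p b) * rho)) :=
        mul_le_mul_of_nonneg_left (hRfine b hbm) hh2
      have hbσ0 : 0 ≤ p b * ((1 - p m) - p b) := mul_nonneg (hp b) hσ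
      have hbσ : p b * ((1 - p m) - p b) ≤ (1 - p m) - p b := by
        calc p b * ((1 - p m) - p b) ≤ 1 * ((1 - p m) - p b) :=
              mul_le_mul_of_nonneg_right hTb hσ
          _ = (1 - p m) - p b := one_mul _
      have hid : (h/2) * (p b * (((1 - p m) - p b) * rho))
          = (h * rho / 2) * (p b * ((1 - p m) - p b)) := by ring
      have hTK : 0 ≤ (1 - p m) * K := mul_nonneg hTge hK0
      rcases hKbig with hlow | hKeq
      · have e2 : h * rho / 2 ≤ 1 := by linarith
        have hd1 : (h/2) * (p a * rho) ≤ p a := by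
          have e : (h/2) * (p a * rho) = (h * rho / 2) * p a := by ring
          rw [e]
          calc (h * rho / 2) * p a ≤ 1 * p a := mul_le_mul_of_nonneg_right e2 (hp a)
            _ = p a := one_mul _
        have hd2 : (h/2) * (p b * (((1 - p m) - p b) * rho)) ≤ (1 - p m) - p b := by
          rw [hid]
          calc (h * rho / 2) * (p b * ((1 - p m) - p b))
              ≤ 1 * (p b * ((1 - p m) - p b)) := mul_le_mul_of_nonneg_right e2 hbσ0
            _ ≤ (1 - p m) - p b := by linarith
        linarith
      · have hbσ2 : p b * ((1 - p m) - p b) ≤ (1 - p m) := by linarith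
        have hd1 : (h/2) * (p a * rho) ≤ (h * rho / 2) * (1 - p m) := by
          have e : (h/2) * (p a * rho) = (h * rho / 2) * p a := by ring
          rw [e]
          exact mul_le_mul_of_nonneg_left hpa hhr
        have hd2 : (h/2) * (p b * (((1 - p m) - p b) * rho))
            ≤ (h * rho / 2) * (1 - p m) := by
          rw [hid]
          exact mul_le_mul_of_nonneg_left hbσ2 hhr
        have hd : (h * rho / 2) * (1 - p m) + (h * rho / 2) * (1 - p m)
            = (1 - p m) * K := by rw [hKeq]; ring
        linarith





lemma aux_sum_erase' (p : Fin c → ℝ) (hs : ∑ i, p i = 1) (m : Fin c) :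
    ∑ i ∈ Finset.univ.erase m, p i = 1 - p m := by
  rw [Finset.sum_erase_eq_sub (Finset.mem_univ m), hs]

lemma aux_lift_denom_pos (p v : Fin c → ℝ) (m : Fin c) (hp : ∀ i, 0 < p i) :
    0 < ∑ i, p i * Real.exp (v i) := by
  have hne : (Finset.univ : Finset (Fin c)).Nonempty := ⟨m, Finset.mem_univ m⟩
  exact Finset.sum_pos (fun i _ => mul_pos (hp i) (Real.exp_pos _)) hne

lemma aux_lift_nonneg (p v : Fin c → ℝ) (m : Fin c) (hp : ∀ i, 0 < p i) (j : Fin c) :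
    0 ≤ liftMap p v j :=
  div_nonneg (mul_nonneg (hp j).le (Real.exp_pos _).le) (aux_lift_denom_pos p v m hp).le

lemma aux_lift_sum (p v : Fin c → ℝ) (m : Fin c) (hp : ∀ i, 0 < p i) :
    ∑ j, liftMap p v j = 1 := by
  have hD := aux_lift_denom_pos p v m hp
  unfold liftMap
  rw [← Finset.sum_div, div_self (ne_of_gt hD)]

/-- One-step contraction of the mass outside coordinate `m` under the lifting map. -/
lemma aux_lift_contract (p v : Fin c → ℝ) (m : Fin c)
    (hp : ∀ i, 0 < p i) (hs : ∑ i, p i = 1)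
    (γ : ℝ) (hγ : 0 < γ) (hv : ∀ j, j ≠ m → v j + γ ≤ v m)
    (t : ℝ) (ht : 1 - p m ≤ t) (ht1 : t < 1) :
    1 - liftMap p v m ≤
      (Real.exp (-γ) / (1 - t + t * Real.exp (-γ))) * (1 - p m) := by
  have hD := aux_lift_denom_pos p v m hp
  set E : ℝ := Real.exp (-γ) with hE
  have hE0 : 0 < E := Real.exp_pos _
  have hE1 : E < 1 := by
    rw [hE]
    exact Real.exp_lt_one_iff.2 (by linarith)
  set T : ℝ := 1 - p m with hT
  have hT0 : 0 ≤ T := by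
    rw [hT, ← aux_sum_erase' p hs m]
    exact Finset.sum_nonneg fun i _ => (hp i).le
  have hT1 : T < 1 := by rw [hT]; linarith [hp m]
  have htt : T ≤ t := ht
  have ht0 : 0 ≤ t := le_trans hT0 htt
  -- split denominator
  have hsplit : ∑ i, p i * Real.exp (v i)
      = p m * Real.exp (v m) + ∑ i ∈ Finset.univ.erase m, p i * Real.exp (v i) :=
    (Finset.add_sum_erase _ _ (Finset.mem_univ m)).symm
  set Y : ℝ := ∑ i ∈ Finset.univ.erase m, p i * Real.exp (v i) with hY
  have hY0 : 0 ≤ Y := Finset.sum_nonneg fun i _ => mul_nonneg (hp i).le (Real.exp_pos _).le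
  have hYle : Y ≤ T * (Real.exp (v m) * E) := by
    rw [hY]
    calc ∑ i ∈ Finset.univ.erase m, p i * Real.exp (v i)
        ≤ ∑ i ∈ Finset.univ.erase m, p i * (Real.exp (v m) * E) := by
          apply Finset.sum_le_sum
          intro i hi
          have hne := (Finset.mem_erase.1 hi).1
          have : v i ≤ v m - γ := by linarith [hv i hne]
          have := Real.exp_le_exp.2 this
          rw [Real.exp_sub] at this
          have hEeq : Real.exp (v m) / Real.exp γ = Real.exp (v m) * E := by
            rw [hE, Real.exp_neg]; ring
          rw [hEeq] at this
          exact mul_le_mul_of_nonneg_left this (hp i).le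
      _ = T * (Real.exp (v m) * E) := by
          rw [← Finset.sum_mul, aux_sum_erase' p hs m, hT]
  have hone : 1 - liftMap p v m = Y / (p m * Real.exp (v m) + Y) := by
    unfold liftMap
    rw [← hsplit]
    field_simp
    rw [hsplit]; ring
  rw [hone]
  have hA0 : 0 < p m * Real.exp (v m) := mul_pos (hp m) (Real.exp_pos _)
  have hden1 : 0 < p m * Real.exp (v m) + Y := by linarith
  have hden2 : 0 < p m * Real.exp (v m) + T * (Real.exp (v m) * E) := by
    have : 0 ≤ T * (Real.exp (v m) * E) := mul_nonneg hT0 (by positivity)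
    linarith
  -- monotone in Y
  have step1 : Y / (p m * Real.exp (v m) + Y)
      ≤ T * (Real.exp (v m) * E) / (p m * Real.exp (v m) + T * (Real.exp (v m) * E)) := by
    rw [div_le_div_iff₀ hden1 hden2]
    nlinarith [hYle, hY0, hA0]
  -- cancel exp (v m)
  have hexp0 : 0 < Real.exp (v m) := Real.exp_pos _
  have step2 : T * (Real.exp (v m) * E) / (p m * Real.exp (v m) + T * (Real.exp (v m) * E))
      = T * E / (1 - T + T * E) := by
    rw [hT]
    have e1 : p m * Real.exp (v m) + (1 - p m) * (Real.exp (v m) * E)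
        = Real.exp (v m) * (p m + (1 - p m) * E) := by ring
    have e2 : (1 - p m) * (Real.exp (v m) * E) = Real.exp (v m) * ((1 - p m) * E) := by ring
    rw [e1, e2, mul_div_mul_left _ _ (ne_of_gt hexp0)]
    congr 1
    ring
  rw [step2] at step1
  have hB0 : 0 < 1 - t + t * E := by nlinarith
  have hA0' : 0 < 1 - T + T * E := by nlinarith
  have step3 : T * E / (1 - T + T * E) ≤ T * E / (1 - t + t * E) := by
    apply div_le_div_of_nonneg_left (mul_nonneg hT0 hE0.le) hB0
    · nlinarith
  calc Y / (p m * Real.exp (v m) + Y) ≤ T * E / (1 - T + T * E) := step1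
    _ ≤ T * E / (1 - t + t * E) := step3
    _ = E / (1 - t + t * E) * (1 - p m) := by rw [hT]; ring


end AuxLemmas

section StepGap

lemma aux_omApp_diff (Ω : V → V → ℝ) (F : V → Fin c → ℝ) (x : V) (a b : Fin c) :
    omApp Ω F x a - omApp Ω F x b = ∑ y, Ω x y * (F y a - F y b) := by
  simp only [omApp, ← Finset.sum_sub_distrib]
  exact Finset.sum_congr rfl fun y _ => by ring

set_option maxHeartbeats 1000000 in
lemma aux_step_gap [Nonempty V] (hc : 2 ≤ c)
    (Ω : V → V → ℝ) (hnn : ∀ x y, 0 ≤ Ω x y) (hub : ∀ x y, Ω x y ≤ 1)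
    (jstar : V → Fin c) (Sstar : V → Fin c → ℝ)
    (hSstar : ∀ x j, Sstar x j = if j = jstar x then 1 else 0)
    (hstab : ∀ x, ∀ j, j ≠ jstar x → omApp Ω Sstar x j < omApp Ω Sstar x (jstar x))
    (rhostar : ℝ)
    (hrho_ub : ∀ T : V → Fin c → ℝ, (∀ x, (∀ j, 0 ≤ T x j) ∧ ∑ j, T x j = 1) →
      ∀ x, ∀ j, j ≠ jstar x → omApp Ω T x (jstar x) - omApp Ω T x j ≤ rhostar)
    (Nmax : ℕ)
    (hN : Nmax = Finset.univ.sup (fun y : V => (Finset.univ.filter (fun z : V => 0 < Ω y z)).card))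
    (hbar C : ℝ) (hbar0 : 0 ≤ hbar) (hC : C = hbar * (c : ℝ) * (Nmax : ℝ))
    (ε : ℝ) (hε : 0 < ε)
    (hε1 : ∀ x, ∀ j, j ≠ jstar x →
      ε ≤ 2 * (omApp Ω Sstar x (jstar x) - omApp Ω Sstar x j)
            / ((∑ y, Ω x y) + (omApp Ω Sstar x (jstar x) - omApp Ω Sstar x j)))
    (hε2 : ∀ x, ∀ j, j ≠ jstar x →
      ε ≤ 2 * (omApp Ω Sstar x (jstar x) - omApp Ω Sstar x j)
            / (1 + C * rhostar + (omApp Ω Sstar x (jstar x) - omApp Ω Sstar x j)))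
    (W : V → Fin c → ℝ) (hW : ∀ x, (∀ j, 0 < W x j) ∧ ∑ j, W x j = 1)
    (η : ℝ) (hη0 : 0 ≤ η) (hηε : η < ε)
    (hηd : ∀ y, ∑ j, |W y j - Sstar y j| ≤ η)
    (hcur : ℝ) (hcur0 : 0 ≤ hcur) (hcurb : hcur ≤ hbar) :
    ∀ x j, j ≠ jstar x →
      (1 - η / ε) * (omApp Ω Sstar x (jstar x) - omApp Ω Sstar x j) ≤
        (omApp Ω W x (jstar x) + hcur / 2 * omApp Ω (RSOm Ω W) x (jstar x))
          - (omApp Ω W x j + hcur / 2 * omApp Ω (RSOm Ω W) x j) := by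
  have hWpos : ∀ y j, 0 < W y j := fun y => (hW y).1
  have hWnn : ∀ y j, 0 ≤ W y j := fun y j => (hWpos y j).le
  have hWsum : ∀ y, ∑ j, W y j = 1 := fun y => (hW y).2
  -- ℓ¹ distance bound on off-mass
  have hTbd : ∀ y, 1 - W y (jstar y) ≤ η / 2 := by
    intro y
    have e1 : ∑ j, |W y j - Sstar y j| = 2 * (1 - W y (jstar y)) := by
      calc ∑ j, |W y j - Sstar y j|
          = ∑ j, |W y j - (if j = jstar y then 1 else 0)| :=
            Finset.sum_congr rfl fun j _ => by rw [hSstar]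
        _ = 2 * (1 - W y (jstar y)) := aux_l1_eq (W y) (hWnn y) (hWsum y) (jstar y)
    have := hηd y
    rw [e1] at this
    linarith
  have hTnn : ∀ y, 0 ≤ 1 - W y (jstar y) :=
    fun y => aux_T_nonneg (W y) (hWnn y) (hWsum y) (jstar y)
  -- star rewriting
  have hstar : ∀ (y : V) (b : Fin c), Sstar y b = if jstar y = b then 1 else 0 :=
    fun y b => by rw [hSstar]; exact if_congr eq_comm rfl rfl
  have hstar_diff : ∀ (y : V) (a b : Fin c),
      Sstar y a - Sstar y b =
        ((if jstar y = a then (1:ℝ) else 0) - (if jstar y = b then 1 else 0)) := by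
    intro y a b; rw [hstar y a, hstar y b]
  have hite01 : ∀ (y : V) (a : Fin c),
      (0:ℝ) ≤ (if jstar y = a then (1:ℝ) else 0) ∧ (if jstar y = a then (1:ℝ) else 0) ≤ 1 := by
    intro y a
    by_cases h : jstar y = a <;> simp [h]
  have hstar1 : ∀ (y : V) (a b : Fin c), a ≠ b →
      0 ≤ 1 + ((if jstar y = a then (1:ℝ) else 0) - (if jstar y = b then 1 else 0)) := by
    intro y a b _
    have h1 := hite01 y a
    have h2 := hite01 y b
    linarith [h1.1, h2.2]
  have hstar_le1 : ∀ (y : V) (a b : Fin c),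
      ((if jstar y = a then (1:ℝ) else 0) - (if jstar y = b then 1 else 0)) ≤ 1 := by
    intro y a b
    have h1 := hite01 y a
    have h2 := hite01 y b
    linarith [h1.2, h2.1]
  -- delta as a sum
  have hdl_sum : ∀ x (b : Fin c), omApp Ω Sstar x (jstar x) - omApp Ω Sstar x b =
      ∑ y, Ω x y * ((if jstar y = jstar x then (1:ℝ) else 0) - (if jstar y = b then 1 else 0)) := by
    intro x b
    rw [aux_omApp_diff]
    exact Finset.sum_congr rfl fun y _ => by rw [hstar_diff]
  have hdlpos : ∀ x (b : Fin c), b ≠ jstar x →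
      0 < omApp Ω Sstar x (jstar x) - omApp Ω Sstar x b := by
    intro x b hb; linarith [hstab x b hb]
  have hw0 : ∀ x, (0:ℝ) ≤ ∑ y, Ω x y := fun x => Finset.sum_nonneg fun y _ => hnn x y
  have hdlw : ∀ x (b : Fin c), omApp Ω Sstar x (jstar x) - omApp Ω Sstar x b ≤ ∑ y, Ω x y := by
    intro x b
    rw [hdl_sum]
    apply Finset.sum_le_sum
    intro y _
    calc Ω x y * ((if jstar y = jstar x then (1:ℝ) else 0) - (if jstar y = b then 1 else 0))
        ≤ Ω x y * 1 := mul_le_mul_of_nonneg_left (hstar_le1 y (jstar x) b) (hnn x y)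
      _ = Ω x y := mul_one _
  -- rhostar ≥ w x
  have hrhow : ∀ x, (∑ y, Ω x y) ≤ rhostar := by
    intro x
    obtain ⟨b, hb⟩ : ∃ b : Fin c, b ≠ jstar x := by
      have h1 : 1 < Fintype.card (Fin c) := by rw [Fintype.card_fin]; omega
      exact Fintype.exists_ne_of_one_lt_card h1 (jstar x)
    have hT : ∀ z : V, (∀ j, 0 ≤ (fun (_ : V) (i : Fin c) =>
        if i = jstar x then (1:ℝ) else 0) z j) ∧
        ∑ j, (fun (_ : V) (i : Fin c) => if i = jstar x then (1:ℝ) else 0) z j = 1 := by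
      intro z
      refine ⟨fun j => ?_, ?_⟩
      · by_cases h : j = jstar x <;> simp [h]
      · simp
    have hkey := hrho_ub _ hT x b hb
    have e1 : omApp Ω (fun (_ : V) (i : Fin c) => if i = jstar x then (1:ℝ) else 0) x (jstar x)
        = ∑ y, Ω x y := by simp [omApp]
    have e2 : omApp Ω (fun (_ : V) (i : Fin c) => if i = jstar x then (1:ℝ) else 0) x b
        = 0 := by simp [omApp, if_neg hb]
    rw [e1, e2] at hkey
    linarith
  have hrho0 : 0 ≤ rhostar := by
    obtain ⟨x⟩ := (inferInstance : Nonempty V)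
    exact le_trans (hw0 x) (hrhow x)
  have hC0 : 0 ≤ C := by
    rw [hC]; positivity
  have hCr0 : 0 ≤ C * rhostar := mul_nonneg hC0 hrho0
  -- ε inequalities in product form
  have hε1' : ∀ x (b : Fin c), b ≠ jstar x →
      ε * ((∑ y, Ω x y) + (omApp Ω Sstar x (jstar x) - omApp Ω Sstar x b))
        ≤ 2 * (omApp Ω Sstar x (jstar x) - omApp Ω Sstar x b) := by
    intro x b hb
    have hpos : 0 < (∑ y, Ω x y) + (omApp Ω Sstar x (jstar x) - omApp Ω Sstar x b) := by
      linarith [hdlpos x b hb, hw0 x]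
    exact (le_div_iff₀ hpos).1 (hε1 x b hb)
  have hε2' : ∀ x (b : Fin c), b ≠ jstar x →
      ε * (1 + C * rhostar + (omApp Ω Sstar x (jstar x) - omApp Ω Sstar x b))
        ≤ 2 * (omApp Ω Sstar x (jstar x) - omApp Ω Sstar x b) := by
    intro x b hb
    have hpos : 0 < 1 + C * rhostar + (omApp Ω Sstar x (jstar x) - omApp Ω Sstar x b) := by
      linarith [hdlpos x b hb]
    exact (le_div_iff₀ hpos).1 (hε2 x b hb)
  -- w ≤ Nmax
  have hwN : ∀ x, (∑ y, Ω x y) ≤ (Nmax : ℝ) := by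
    intro x
    have e1 : (∑ y, Ω x y) ≤ ∑ y, (if 0 < Ω x y then (1:ℝ) else 0) := by
      apply Finset.sum_le_sum
      intro y _
      by_cases h : 0 < Ω x y
      · rw [if_pos h]; exact hub x y
      · rw [if_neg h]
        have := hnn x y
        linarith [lt_or_ge 0 (Ω x y)]
    have e2 : ∑ y, (if 0 < Ω x y then (1:ℝ) else 0)
        = ((Finset.univ.filter (fun z : V => 0 < Ω x z)).card : ℝ) := by
      rw [Finset.sum_boole]
    have e3 : (Finset.univ.filter (fun z : V => 0 < Ω x z)).card ≤ Nmax := by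
      rw [hN]
      exact Finset.le_sup (f := fun y : V => (Finset.univ.filter (fun z : V => 0 < Ω y z)).card)
        (Finset.mem_univ x)
    calc (∑ y, Ω x y) ≤ ∑ y, (if 0 < Ω x y then (1:ℝ) else 0) := e1
      _ = ((Finset.univ.filter (fun z : V => 0 < Ω x z)).card : ℝ) := e2
      _ ≤ (Nmax : ℝ) := Nat.cast_le.2 e3
  -- zeroth-order summed bound (pure algebra part)
  have hmid : ∀ x (b : Fin c), b ≠ jstar x →
      (omApp Ω Sstar x (jstar x) - omApp Ω Sstar x b)
        - η / 2 * ((∑ y, Ω x y) + (omApp Ω Sstar x (jstar x) - omApp Ω Sstar x b))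
      ≤ ∑ y, Ω x y *
        (((if jstar y = jstar x then (1:ℝ) else 0) - (if jstar y = b then 1 else 0))
          - (1 - W y (jstar y)) *
            (1 + ((if jstar y = jstar x then (1:ℝ) else 0) - (if jstar y = b then 1 else 0)))) := by
    intro x b hb
    have hab : jstar x ≠ b := Ne.symm hb
    have e1 : ∑ y, Ω x y *
        (((if jstar y = jstar x then (1:ℝ) else 0) - (if jstar y = b then 1 else 0))
          - (1 - W y (jstar y)) *
            (1 + ((if jstar y = jstar x then (1:ℝ) else 0) - (if jstar y = b then 1 else 0))))
        = (∑ y, Ω x y * ((if jstar y = jstar x then (1:ℝ) else 0) - (if jstar y = b then 1 else 0)))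
          - ∑ y, Ω x y * ((1 - W y (jstar y)) *
            (1 + ((if jstar y = jstar x then (1:ℝ) else 0) - (if jstar y = b then 1 else 0)))) := by
      rw [← Finset.sum_sub_distrib]
      exact Finset.sum_congr rfl fun y _ => by ring
    have e2 : ∑ y, Ω x y * ((1 - W y (jstar y)) *
          (1 + ((if jstar y = jstar x then (1:ℝ) else 0) - (if jstar y = b then 1 else 0))))
        ≤ η / 2 * ((∑ y, Ω x y) + (omApp Ω Sstar x (jstar x) - omApp Ω Sstar x b)) := by
      have e21 : ∀ y, Ω x y * ((1 - W y (jstar y)) *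
            (1 + ((if jstar y = jstar x then (1:ℝ) else 0) - (if jstar y = b then 1 else 0))))
          ≤ Ω x y * (η / 2 *
            (1 + ((if jstar y = jstar x then (1:ℝ) else 0) - (if jstar y = b then 1 else 0)))) := by
        intro y
        exact mul_le_mul_of_nonneg_left
          (mul_le_mul_of_nonneg_right (hTbd y) (hstar1 y (jstar x) b hab)) (hnn x y)
      calc ∑ y, Ω x y * ((1 - W y (jstar y)) *
            (1 + ((if jstar y = jstar x then (1:ℝ) else 0) - (if jstar y = b then 1 else 0))))
          ≤ ∑ y, Ω x y * (η / 2 *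
            (1 + ((if jstar y = jstar x then (1:ℝ) else 0) - (if jstar y = b then 1 else 0)))) :=
            Finset.sum_le_sum fun y _ => e21 y
        _ = ∑ y, (η / 2 * (Ω x y + Ω x y *
            ((if jstar y = jstar x then (1:ℝ) else 0) - (if jstar y = b then 1 else 0)))) :=
            Finset.sum_congr rfl fun y _ => by ring
        _ = η / 2 * ∑ y, (Ω x y + Ω x y *
            ((if jstar y = jstar x then (1:ℝ) else 0) - (if jstar y = b then 1 else 0))) := by
            rw [← Finset.mul_sum]
        _ = η / 2 * ((∑ y, Ω x y) +
            ∑ y, Ω x y * ((if jstar y = jstar x then (1:ℝ) else 0) - (if jstar y = b then 1 else 0))) := by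
            rw [Finset.sum_add_distrib]
        _ = η / 2 * ((∑ y, Ω x y) + (omApp Ω Sstar x (jstar x) - omApp Ω Sstar x b)) := by
            rw [← hdl_sum]
    rw [e1, ← hdl_sum x b]
    linarith
  have hsum0 : ∀ x (b : Fin c), b ≠ jstar x →
      (omApp Ω Sstar x (jstar x) - omApp Ω Sstar x b)
        - η / 2 * ((∑ y, Ω x y) + (omApp Ω Sstar x (jstar x) - omApp Ω Sstar x b))
      ≤ ∑ y, Ω x y * (W y (jstar x) - W y b) := by
    intro x b hb
    have hab : jstar x ≠ b := Ne.symm hb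
    have per : ∀ y, Ω x y *
        (((if jstar y = jstar x then (1:ℝ) else 0) - (if jstar y = b then 1 else 0))
          - (1 - W y (jstar y)) *
            (1 + ((if jstar y = jstar x then (1:ℝ) else 0) - (if jstar y = b then 1 else 0))))
        ≤ Ω x y * (W y (jstar x) - W y b) := by
      intro y
      exact mul_le_mul_of_nonneg_left
        (aux_perZ (W y) (hWnn y) (hWsum y) (jstar y) (jstar x) b hab) (hnn x y)
    have hsumle := Finset.sum_le_sum (fun y (_ : y ∈ Finset.univ) => per y)
    exact le_trans (hmid x b hb) hsumle
  -- maximality and rho bounds for u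
  have hG1 : ∀ (y : V) (i : Fin c), omApp Ω W y i ≤ omApp Ω W y (jstar y) := by
    intro y i
    by_cases hi : i = jstar y
    · rw [hi]
    · have h1 := hsum0 y i hi
      rw [← aux_omApp_diff Ω W y (jstar y) i] at h1
      have h2 := hε1' y i hi
      have h3 : η * ((∑ z, Ω y z) + (omApp Ω Sstar y (jstar y) - omApp Ω Sstar y i))
          ≤ ε * ((∑ z, Ω y z) + (omApp Ω Sstar y (jstar y) - omApp Ω Sstar y i)) := by
        apply mul_le_mul_of_nonneg_right (le_of_lt hηε)
        linarith [hw0 y, (hdlpos y i hi)]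
      linarith
  have hG2 : ∀ (y : V) (i : Fin c), omApp Ω W y (jstar y) - omApp Ω W y i ≤ rhostar := by
    intro y i
    by_cases hi : i = jstar y
    · rw [hi]; simpa using hrho0
    · exact hrho_ub W (fun z => ⟨fun j => hWnn z j, hWsum z⟩) y i hi
  -- main estimate
  intro x j hj
  have hab : jstar x ≠ j := Ne.symm hj
  set K : ℝ := if hcur * rhostar ≤ 2 then 0 else hcur * rhostar with hKdef
  have hK0 : 0 ≤ K := by
    rw [hKdef]
    split
    · exact le_refl 0
    · exact mul_nonneg hcur0 hrho0
  have hKbig : hcur * rhostar ≤ 2 ∨ K = hcur * rhostar := by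
    by_cases h : hcur * rhostar ≤ 2
    · exact Or.inl h
    · exact Or.inr (by rw [hKdef, if_neg h])
  -- per-vertex inequality with replicator terms
  have per : ∀ y, Ω x y *
      ((((if jstar y = jstar x then (1:ℝ) else 0) - (if jstar y = j then 1 else 0))
        - (1 - W y (jstar y)) *
          (1 + ((if jstar y = jstar x then (1:ℝ) else 0) - (if jstar y = j then 1 else 0)))
        - (1 - W y (jstar y)) * K))
      ≤ Ω x y * ((W y (jstar x) - W y j)
          + hcur / 2 * (repl (W y) (omApp Ω W y) (jstar x) - repl (W y) (omApp Ω W y) j)) := by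
    intro y
    refine mul_le_mul_of_nonneg_left ?_ (hnn x y)
    exact aux_perY (W y) (omApp Ω W y) (hWnn y) (hWsum y) (jstar y) (jstar x) j hab
      rhostar hcur hrho0 hcur0 (fun i => hG1 y i) (fun i => hG2 y i) K hK0 hKbig
  have hsumle := Finset.sum_le_sum (fun y (_ : y ∈ Finset.univ) => per y)
  -- rewrite the right-hand side
  have eR1 : ∑ y, Ω x y * (repl (W y) (omApp Ω W y) (jstar x) - repl (W y) (omApp Ω W y) j)
      = omApp Ω (RSOm Ω W) x (jstar x) - omApp Ω (RSOm Ω W) x j := by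
    rw [aux_omApp_diff]
    exact Finset.sum_congr rfl fun y _ => by simp only [RSOm]
  have eR : ∑ y, Ω x y * ((W y (jstar x) - W y j)
      + hcur / 2 * (repl (W y) (omApp Ω W y) (jstar x) - repl (W y) (omApp Ω W y) j))
      = (omApp Ω W x (jstar x) - omApp Ω W x j)
        + hcur / 2 * (omApp Ω (RSOm Ω W) x (jstar x) - omApp Ω (RSOm Ω W) x j) := by
    calc ∑ y, Ω x y * ((W y (jstar x) - W y j)
        + hcur / 2 * (repl (W y) (omApp Ω W y) (jstar x) - repl (W y) (omApp Ω W y) j))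
        = (∑ y, Ω x y * (W y (jstar x) - W y j))
          + ∑ y, hcur / 2 * (Ω x y * (repl (W y) (omApp Ω W y) (jstar x)
              - repl (W y) (omApp Ω W y) j)) := by
          rw [← Finset.sum_add_distrib]
          exact Finset.sum_congr rfl fun y _ => by ring
      _ = (∑ y, Ω x y * (W y (jstar x) - W y j))
          + hcur / 2 * ∑ y, Ω x y * (repl (W y) (omApp Ω W y) (jstar x)
              - repl (W y) (omApp Ω W y) j) := by
          rw [← Finset.mul_sum]
      _ = (omApp Ω W x (jstar x) - omApp Ω W x j)
          + hcur / 2 * (omApp Ω (RSOm Ω W) x (jstar x) - omApp Ω (RSOm Ω W) x j) := by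
          rw [← aux_omApp_diff Ω W x (jstar x) j, eR1]
  -- bound the left-hand side sum from below
  have eL1 : ∑ y, Ω x y *
      ((((if jstar y = jstar x then (1:ℝ) else 0) - (if jstar y = j then 1 else 0))
        - (1 - W y (jstar y)) *
          (1 + ((if jstar y = jstar x then (1:ℝ) else 0) - (if jstar y = j then 1 else 0)))
        - (1 - W y (jstar y)) * K))
      = (∑ y, Ω x y *
        (((if jstar y = jstar x then (1:ℝ) else 0) - (if jstar y = j then 1 else 0))
          - (1 - W y (jstar y)) *
            (1 + ((if jstar y = jstar x then (1:ℝ) else 0) - (if jstar y = j then 1 else 0)))))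
        - ∑ y, Ω x y * ((1 - W y (jstar y)) * K) := by
    rw [← Finset.sum_sub_distrib]
    exact Finset.sum_congr rfl fun y _ => by ring
  have eL2 : ∑ y, Ω x y * ((1 - W y (jstar y)) * K) ≤ η / 2 * K * (∑ y, Ω x y) := by
    calc ∑ y, Ω x y * ((1 - W y (jstar y)) * K)
        ≤ ∑ y, Ω x y * (η / 2 * K) := by
          apply Finset.sum_le_sum
          intro y _
          exact mul_le_mul_of_nonneg_left
            (mul_le_mul_of_nonneg_right (hTbd y) hK0) (hnn x y)
      _ = η / 2 * K * (∑ y, Ω x y) := by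
          rw [← Finset.sum_mul]
          ring
  have total : (omApp Ω Sstar x (jstar x) - omApp Ω Sstar x j)
      - η / 2 * ((∑ y, Ω x y) + (omApp Ω Sstar x (jstar x) - omApp Ω Sstar x j))
      - η / 2 * K * (∑ y, Ω x y)
      ≤ (omApp Ω W x (jstar x) - omApp Ω W x j)
        + hcur / 2 * (omApp Ω (RSOm Ω W) x (jstar x) - omApp Ω (RSOm Ω W) x j) := by
    rw [← eR]
    have := hmid x j hj
    rw [eL1] at hsumle
    linarith
  -- branch on K
  have hgoal : (1 - η / ε) * (omApp Ω Sstar x (jstar x) - omApp Ω Sstar x j)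
      ≤ (omApp Ω W x (jstar x) - omApp Ω W x j)
        + hcur / 2 * (omApp Ω (RSOm Ω W) x (jstar x) - omApp Ω (RSOm Ω W) x j) := by
    by_cases hKc : hcur * rhostar ≤ 2
    · have hKz : K = 0 := by rw [hKdef, if_pos hKc]
      have key : (1 - η / ε) * (omApp Ω Sstar x (jstar x) - omApp Ω Sstar x j)
          ≤ (omApp Ω Sstar x (jstar x) - omApp Ω Sstar x j)
            - η / 2 * ((∑ y, Ω x y) + (omApp Ω Sstar x (jstar x) - omApp Ω Sstar x j)) := by
        have e : (omApp Ω Sstar x (jstar x) - omApp Ω Sstar x j)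
            - η / 2 * ((∑ y, Ω x y) + (omApp Ω Sstar x (jstar x) - omApp Ω Sstar x j))
            - (1 - η / ε) * (omApp Ω Sstar x (jstar x) - omApp Ω Sstar x j)
            = (η / (2 * ε)) * (2 * (omApp Ω Sstar x (jstar x) - omApp Ω Sstar x j)
                - ε * ((∑ y, Ω x y) + (omApp Ω Sstar x (jstar x) - omApp Ω Sstar x j))) := by
          field_simp
          ring
        have e2 : 0 ≤ (η / (2 * ε)) * (2 * (omApp Ω Sstar x (jstar x) - omApp Ω Sstar x j)
            - ε * ((∑ y, Ω x y) + (omApp Ω Sstar x (jstar x) - omApp Ω Sstar x j))) := by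
          apply mul_nonneg
          · positivity
          · linarith [hε1' x j hj]
        linarith
      rw [hKz] at total
      linarith
    · have hKe : K = hcur * rhostar := by rw [hKdef, if_neg hKc]
      have h2K : 2 < hcur * rhostar := lt_of_not_ge hKc
      have hN0 : (0:ℝ) ≤ (Nmax : ℝ) := Nat.cast_nonneg _
      have hc2 : (2:ℝ) ≤ (c : ℝ) := by exact_mod_cast hc
      have hcr0 : 0 ≤ hcur * rhostar := mul_nonneg hcur0 hrho0
      have hbr0 : 0 ≤ hbar * rhostar := mul_nonneg hbar0 hrho0
      have hbrN : hcur * rhostar ≤ hbar * rhostar :=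
        mul_le_mul_of_nonneg_right hcurb hrho0
      -- K * w ≤ hbar * rhostar * Nmax
      have k1 : K * (∑ y, Ω x y) ≤ hbar * rhostar * (Nmax : ℝ) := by
        rw [hKe]
        calc hcur * rhostar * (∑ y, Ω x y)
            ≤ hcur * rhostar * (Nmax : ℝ) :=
              mul_le_mul_of_nonneg_left (hwN x) hcr0
          _ ≤ hbar * rhostar * (Nmax : ℝ) :=
              mul_le_mul_of_nonneg_right hbrN hN0
      -- 2 * (hbar * rhostar * Nmax) ≤ C * rhostar
      have k2 : 2 * (hbar * rhostar * (Nmax : ℝ)) ≤ C * rhostar := by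
        rw [hC]
        have e : hbar * (c:ℝ) * (Nmax:ℝ) * rhostar - 2 * (hbar * rhostar * (Nmax:ℝ))
            = ((c:ℝ) - 2) * (hbar * rhostar * (Nmax:ℝ)) := by ring
        nlinarith [mul_nonneg (mul_nonneg hbar0 hrho0) hN0]
      -- w ≤ (hbar * rhostar / 2) * Nmax
      have k3 : (∑ y, Ω x y) ≤ hbar * rhostar / 2 * (Nmax : ℝ) := by
        have h1 : (1:ℝ) ≤ hbar * rhostar / 2 := by linarith
        calc (∑ y, Ω x y) ≤ (Nmax : ℝ) := hwN x
          _ = 1 * (Nmax : ℝ) := (one_mul _).symm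
          _ ≤ hbar * rhostar / 2 * (Nmax : ℝ) := mul_le_mul_of_nonneg_right h1 hN0
      have k4 : (∑ y, Ω x y) + K * (∑ y, Ω x y) ≤ 1 + C * rhostar := by
        have : (∑ y, Ω x y) + K * (∑ y, Ω x y)
            ≤ hbar * rhostar / 2 * (Nmax : ℝ) + hbar * rhostar * (Nmax : ℝ) := by
          linarith
        nlinarith [mul_nonneg hbr0 hN0]
      have key : (1 - η / ε) * (omApp Ω Sstar x (jstar x) - omApp Ω Sstar x j)
          ≤ (omApp Ω Sstar x (jstar x) - omApp Ω Sstar x j)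
            - η / 2 * ((∑ y, Ω x y) + (omApp Ω Sstar x (jstar x) - omApp Ω Sstar x j))
            - η / 2 * K * (∑ y, Ω x y) := by
        have e : (omApp Ω Sstar x (jstar x) - omApp Ω Sstar x j)
            - η / 2 * (1 + C * rhostar + (omApp Ω Sstar x (jstar x) - omApp Ω Sstar x j))
            - (1 - η / ε) * (omApp Ω Sstar x (jstar x) - omApp Ω Sstar x j)
            = (η / (2 * ε)) * (2 * (omApp Ω Sstar x (jstar x) - omApp Ω Sstar x j)
                - ε * (1 + C * rhostar + (omApp Ω Sstar x (jstar x) - omApp Ω Sstar x j))) := by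
          field_simp
          ring
        have e2 : 0 ≤ (η / (2 * ε)) * (2 * (omApp Ω Sstar x (jstar x) - omApp Ω Sstar x j)
            - ε * (1 + C * rhostar + (omApp Ω Sstar x (jstar x) - omApp Ω Sstar x j))) := by
          apply mul_nonneg
          · positivity
          · linarith [hε2' x j hj]
        have e3 : η / 2 * ((∑ y, Ω x y) + (omApp Ω Sstar x (jstar x) - omApp Ω Sstar x j))
              + η / 2 * K * (∑ y, Ω x y)
            ≤ η / 2 * (1 + C * rhostar + (omApp Ω Sstar x (jstar x) - omApp Ω Sstar x j)) := by
          have e4 : (∑ y, Ω x y) + (omApp Ω Sstar x (jstar x) - omApp Ω Sstar x j)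
              + K * (∑ y, Ω x y)
              ≤ 1 + C * rhostar + (omApp Ω Sstar x (jstar x) - omApp Ω Sstar x j) := by
            linarith
          have e5 : η / 2 * ((∑ y, Ω x y) + (omApp Ω Sstar x (jstar x) - omApp Ω Sstar x j)
              + K * (∑ y, Ω x y))
              ≤ η / 2 * (1 + C * rhostar + (omApp Ω Sstar x (jstar x) - omApp Ω Sstar x j)) :=
            mul_le_mul_of_nonneg_left e4 (by linarith)
          linarith
        linarith
      linarith
  linarith [hgoal]

end StepGap

theorem statement19 {V : Type*} [Fintype V] [Nonempty V] {c : ℕ} (hc : 2 ≤ c)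
    (Ω : V → V → ℝ) (hsymm : ∀ x y, Ω x y = Ω y x)
    (hnn : ∀ x y, 0 ≤ Ω x y) (hub : ∀ x y, Ω x y ≤ 1)
    (S : ℕ → V → Fin c → ℝ)
    (hSW : ∀ k x, (∀ j, 0 < S k x j) ∧ ∑ j, S k x j = 1)
    (θ h : ℕ → ℝ)
    (hrec : ∀ k x, S (k + 1) x = liftMap (S k x) (fun j => θ k * dDir Ω (S k) (h k) x j))
    (θmin θmax : ℝ) (hθmin : 0 < θmin) (hθmax : θmin ≤ θmax)
    (hθrange : ∀ k, θ k ∈ Set.Icc θmin θmax)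
    (hhnn : ∀ k, 0 ≤ h k)
    (hbar : ℝ) (hhbar : ∀ k, h k ≤ hbar)
    (jstar : V → Fin c)
    (Sstar : V → Fin c → ℝ)
    (hSstar : ∀ x j, Sstar x j = if j = jstar x then 1 else 0)
    (hstab : ∀ x, ∀ j, j ≠ jstar x → omApp Ω Sstar x j < omApp Ω Sstar x (jstar x))
    (rhostar : ℝ)
    (hrho_ub : ∀ T : V → Fin c → ℝ, (∀ x, (∀ j, 0 ≤ T x j) ∧ ∑ j, T x j = 1) →
      ∀ x, ∀ j, j ≠ jstar x → omApp Ω T x (jstar x) - omApp Ω T x j ≤ rhostar)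
    (hrho_mem : ∃ T : V → Fin c → ℝ, (∀ x, (∀ j, 0 ≤ T x j) ∧ ∑ j, T x j = 1) ∧
      ∃ x, ∃ j, j ≠ jstar x ∧ omApp Ω T x (jstar x) - omApp Ω T x j = rhostar)
    (Nmax : ℕ)
    (hN : Nmax = Finset.univ.sup (fun y : V => (Finset.univ.filter (fun z : V => 0 < Ω y z)).card))
    (C : ℝ) (hC : C = hbar * (c : ℝ) * (Nmax : ℝ))
    (ε : ℝ) (hε : 0 < ε)
    (hε1 : ∀ x, ∀ j, j ≠ jstar x →
      ε ≤ 2 * (omApp Ω Sstar x (jstar x) - omApp Ω Sstar x j)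
            / ((∑ y, Ω x y) + (omApp Ω Sstar x (jstar x) - omApp Ω Sstar x j)))
    (hε2 : ∀ x, ∀ j, j ≠ jstar x →
      ε ≤ 2 * (omApp Ω Sstar x (jstar x) - omApp Ω Sstar x j)
            / (1 + C * rhostar + (omApp Ω Sstar x (jstar x) - omApp Ω Sstar x j)))
    (k₀ : ℕ)
    (hk₀ : ∀ x, (∑ j, |S k₀ x j - Sstar x j|) < ε) :
    ∃ ξ : V → ℝ, (∀ x, 0 < ξ x ∧ ξ x < 1) ∧
      ∀ k, k₀ < k → ∀ x,
        (∑ j, |S k x j - Sstar x j|)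
          < ξ x ^ (k - k₀) * (∑ j, |S k₀ x j - Sstar x j|) := by
  classical
  have hbar0 : 0 ≤ hbar := le_trans (hhnn 0) (hhbar 0)
  -- distance identity for simplex states
  have hdist_eq : ∀ (x : V) (P : Fin c → ℝ), (∀ i, 0 ≤ P i) → (∑ i, P i = 1) →
      ∑ j, |P j - Sstar x j| = 2 * (1 - P (jstar x)) := by
    intro x P hP hPs
    calc ∑ j, |P j - Sstar x j|
        = ∑ j, |P j - (if j = jstar x then 1 else 0)| :=
          Finset.sum_congr rfl fun j _ => by rw [hSstar]
      _ = 2 * (1 - P (jstar x)) := aux_l1_eq P hP hPs (jstar x)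
  have hdist_nn : ∀ (k : ℕ) (x : V), 0 ≤ ∑ j, |S k x j - Sstar x j| :=
    fun k x => Finset.sum_nonneg fun j _ => abs_nonneg _
  -- the maximal initial distance η
  set η : ℝ := Finset.univ.sup' Finset.univ_nonempty
      (fun x : V => ∑ j, |S k₀ x j - Sstar x j|) with hηdef
  have hηd0 : ∀ x, (∑ j, |S k₀ x j - Sstar x j|) ≤ η := by
    intro x
    exact Finset.le_sup' (f := fun x : V => ∑ j, |S k₀ x j - Sstar x j|) (Finset.mem_univ x)
  have hηε : η < ε := by
    rw [hηdef]
    exact (Finset.sup'_lt_iff Finset.univ_nonempty).2 fun x _ => hk₀ x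
  have hη0 : 0 ≤ η := by
    obtain ⟨x⟩ := (inferInstance : Nonempty V)
    exact le_trans (hdist_nn k₀ x) (hηd0 x)
  -- ε ≤ 1
  have hδpos : ∀ x (b : Fin c), b ≠ jstar x →
      0 < omApp Ω Sstar x (jstar x) - omApp Ω Sstar x b := by
    intro x b hb; linarith [hstab x b hb]
  have hSstar01 : ∀ y i, 0 ≤ Sstar y i ∧ Sstar y i ≤ 1 := by
    intro y i
    rw [hSstar]
    by_cases hh : i = jstar y <;> simp [hh]
  have hom_nn : ∀ x (b : Fin c), 0 ≤ omApp Ω Sstar x b := by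
    intro x b
    exact Finset.sum_nonneg fun y _ => mul_nonneg (hnn x y) (hSstar01 y b).1
  have hom_le_w : ∀ x (b : Fin c), omApp Ω Sstar x b ≤ ∑ y, Ω x y := by
    intro x b
    apply Finset.sum_le_sum
    intro y _
    calc Ω x y * Sstar y b ≤ Ω x y * 1 :=
          mul_le_mul_of_nonneg_left (hSstar01 y b).2 (hnn x y)
      _ = Ω x y := mul_one _
  have hεle1 : ε ≤ 1 := by
    obtain ⟨x⟩ := (inferInstance : Nonempty V)
    obtain ⟨b, hb⟩ : ∃ b : Fin c, b ≠ jstar x := by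
      have h1 : 1 < Fintype.card (Fin c) := by rw [Fintype.card_fin]; omega
      exact Fintype.exists_ne_of_one_lt_card h1 (jstar x)
    have hpos : 0 < (∑ y, Ω x y) + (omApp Ω Sstar x (jstar x) - omApp Ω Sstar x b) := by
      have := hδpos x b hb
      have h2 := hom_le_w x (jstar x)
      have h3 := hom_nn x b
      linarith
    have h1 := (le_div_iff₀ hpos).1 (hε1 x b hb)
    have h2 := hom_le_w x (jstar x)
    have h3 := hom_nn x b
    have h4 := hδpos x b hb
    nlinarith
  have hη1 : η < 1 ∨ η < ε := Or.inr hηε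
  -- per-vertex minimal gap, contraction parameters
  have herne : ∀ x : V, (Finset.univ.erase (jstar x)).Nonempty := by
    intro x
    obtain ⟨b, hb⟩ : ∃ b : Fin c, b ≠ jstar x := by
      have h1 : 1 < Fintype.card (Fin c) := by rw [Fintype.card_fin]; omega
      exact Fintype.exists_ne_of_one_lt_card h1 (jstar x)
    exact ⟨b, Finset.mem_erase.2 ⟨hb, Finset.mem_univ b⟩⟩
  set dmin : V → ℝ := fun x => (Finset.univ.erase (jstar x)).inf' (herne x)
      (fun j => omApp Ω Sstar x (jstar x) - omApp Ω Sstar x j) with hdmindef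
  have hdmin_le : ∀ x (b : Fin c), b ≠ jstar x →
      dmin x ≤ omApp Ω Sstar x (jstar x) - omApp Ω Sstar x b := by
    intro x b hb
    exact Finset.inf'_le _ (Finset.mem_erase.2 ⟨hb, Finset.mem_univ b⟩)
  have hdmin_pos : ∀ x, 0 < dmin x := by
    intro x
    rw [hdmindef]
    rw [Finset.lt_inf'_iff]
    intro b hb
    exact hδpos x b (Finset.mem_erase.1 hb).1
  set κ : ℝ := 1 - η / ε with hκdef
  have hκpos : 0 < κ := by
    rw [hκdef]
    have : η / ε < 1 := (div_lt_one hε).2 hηε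
    linarith
  set γ : V → ℝ := fun x => θmin * (κ * dmin x) with hγdef
  have hγpos : ∀ x, 0 < γ x := by
    intro x
    rw [hγdef]
    exact mul_pos hθmin (mul_pos hκpos (hdmin_pos x))
  set q : V → ℝ := fun x =>
    Real.exp (-(γ x)) / (1 - η / 2 + η / 2 * Real.exp (-(γ x))) with hqdef
  have hden_pos : ∀ x, 0 < 1 - η / 2 + η / 2 * Real.exp (-(γ x)) := by
    intro x
    have h1 : 0 < Real.exp (-(γ x)) := Real.exp_pos _
    have h2 : η / 2 < 1 := by linarith
    nlinarith
  have hq0 : ∀ x, 0 < q x := by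
    intro x
    rw [hqdef]
    exact div_pos (Real.exp_pos _) (hden_pos x)
  have hq1 : ∀ x, q x < 1 := by
    intro x
    rw [hqdef]
    rw [div_lt_one (hden_pos x)]
    have hE1 : Real.exp (-(γ x)) < 1 := Real.exp_lt_one_iff.2 (by linarith [hγpos x])
    have hE0 : 0 < Real.exp (-(γ x)) := Real.exp_pos _
    nlinarith
  -- the inductive contraction estimate
  have main : ∀ n : ℕ, ∀ x : V,
      (∑ j, |S (k₀ + n) x j - Sstar x j|) ≤ q x ^ n * (∑ j, |S k₀ x j - Sstar x j|) := by
    intro n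
    induction n with
    | zero => intro x; simp
    | succ n ih =>
      have hcur_le : ∀ y, (∑ j, |S (k₀ + n) y j - Sstar y j|) ≤ η := by
        intro y
        have h1 : q y ^ n ≤ 1 :=
          pow_le_one₀ (hq0 y).le (hq1 y).le
        calc (∑ j, |S (k₀ + n) y j - Sstar y j|)
            ≤ q y ^ n * (∑ j, |S k₀ y j - Sstar y j|) := ih y
          _ ≤ 1 * (∑ j, |S k₀ y j - Sstar y j|) :=
              mul_le_mul_of_nonneg_right h1 (hdist_nn k₀ y)
          _ = ∑ j, |S k₀ y j - Sstar y j| := one_mul _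
          _ ≤ η := hηd0 y
      have gap := aux_step_gap hc Ω hnn hub jstar Sstar hSstar hstab rhostar hrho_ub
        Nmax hN hbar C hbar0 hC ε hε hε1 hε2 (S (k₀ + n)) (hSW (k₀ + n)) η hη0 hηε
        hcur_le (h (k₀ + n)) (hhnn (k₀ + n)) (hhbar (k₀ + n))
      intro x
      set p : Fin c → ℝ := S (k₀ + n) x with hpdef
      set v : Fin c → ℝ := fun j => θ (k₀ + n) * dDir Ω (S (k₀ + n)) (h (k₀ + n)) x j
        with hvdef
      have hppos : ∀ i, 0 < p i := (hSW (k₀ + n) x).1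
      have hpsum : ∑ i, p i = 1 := (hSW (k₀ + n) x).2
      -- gap of v between jstar x and other coordinates
      have hv : ∀ j, j ≠ jstar x → v j + γ x ≤ v (jstar x) := by
        intro j hj
        have hθ := hθrange (k₀ + n)
        have hgapj := gap x j hj
        have hdd : dDir Ω (S (k₀ + n)) (h (k₀ + n)) x (jstar x)
            - dDir Ω (S (k₀ + n)) (h (k₀ + n)) x j
            = (omApp Ω (S (k₀ + n)) x (jstar x)
                + h (k₀ + n) / 2 * omApp Ω (RSOm Ω (S (k₀ + n))) x (jstar x))
              - (omApp Ω (S (k₀ + n)) x j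
                + h (k₀ + n) / 2 * omApp Ω (RSOm Ω (S (k₀ + n))) x j) := by
          simp only [dDir, proj0]
          ring
        have hD : κ * dmin x ≤ dDir Ω (S (k₀ + n)) (h (k₀ + n)) x (jstar x)
            - dDir Ω (S (k₀ + n)) (h (k₀ + n)) x j := by
          rw [hdd]
          have h1 : κ * dmin x ≤ κ * (omApp Ω Sstar x (jstar x) - omApp Ω Sstar x j) :=
            mul_le_mul_of_nonneg_left (hdmin_le x j hj) hκpos.le
          calc κ * dmin x ≤ κ * (omApp Ω Sstar x (jstar x) - omApp Ω Sstar x j) := h1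
            _ ≤ _ := by rw [hκdef]; exact hgapj
        have hvdiff : v (jstar x) - v j = θ (k₀ + n) *
            (dDir Ω (S (k₀ + n)) (h (k₀ + n)) x (jstar x)
              - dDir Ω (S (k₀ + n)) (h (k₀ + n)) x j) := by
          rw [hvdef]; ring
        have hstep : γ x ≤ v (jstar x) - v j := by
          rw [hvdiff, hγdef]
          have hDnn : 0 ≤ dDir Ω (S (k₀ + n)) (h (k₀ + n)) x (jstar x)
              - dDir Ω (S (k₀ + n)) (h (k₀ + n)) x j :=
            le_trans (mul_pos hκpos (hdmin_pos x)).le hD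
          calc θmin * (κ * dmin x)
              ≤ θmin * (dDir Ω (S (k₀ + n)) (h (k₀ + n)) x (jstar x)
                - dDir Ω (S (k₀ + n)) (h (k₀ + n)) x j) :=
                mul_le_mul_of_nonneg_left hD hθmin.le
            _ ≤ θ (k₀ + n) * (dDir Ω (S (k₀ + n)) (h (k₀ + n)) x (jstar x)
                - dDir Ω (S (k₀ + n)) (h (k₀ + n)) x j) :=
                mul_le_mul_of_nonneg_right hθ.1 hDnn
        linarith
      -- apply the lifting contraction
      have hT : 1 - p (jstar x) ≤ η / 2 := by
        have := hcur_le x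
        rw [hdist_eq x p (fun i => (hppos i).le) hpsum] at this
        linarith
      have hη2 : η / 2 < 1 := by linarith
      have hlift := aux_lift_contract p v (jstar x) hppos hpsum (γ x) (hγpos x) hv
        (η / 2) hT hη2
      have hnext : S (k₀ + n + 1) x = liftMap p v := hrec (k₀ + n) x
      have hlift_nn : ∀ i, 0 ≤ liftMap p v i := aux_lift_nonneg p v (jstar x) hppos
      have hlift_sum : ∑ i, liftMap p v i = 1 := aux_lift_sum p v (jstar x) hppos
      have e1 : (∑ j, |S (k₀ + (n + 1)) x j - Sstar x j|)
          = 2 * (1 - liftMap p v (jstar x)) := by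
        have e0 : k₀ + (n + 1) = (k₀ + n) + 1 := by ring
        rw [e0]
        calc (∑ j, |S ((k₀ + n) + 1) x j - Sstar x j|)
            = ∑ j, |liftMap p v j - Sstar x j| := by
              exact Finset.sum_congr rfl fun j _ => by rw [hnext]
          _ = 2 * (1 - liftMap p v (jstar x)) :=
              hdist_eq x (liftMap p v) hlift_nn hlift_sum
      have e2 : (∑ j, |S (k₀ + n) x j - Sstar x j|) = 2 * (1 - p (jstar x)) :=
        hdist_eq x p (fun i => (hppos i).le) hpsum
      have hqx : Real.exp (-(γ x)) / (1 - η / 2 + η / 2 * Real.exp (-(γ x))) = q x := by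
        rw [hqdef]
      calc (∑ j, |S (k₀ + (n + 1)) x j - Sstar x j|)
          = 2 * (1 - liftMap p v (jstar x)) := e1
        _ ≤ 2 * ((Real.exp (-(γ x)) / (1 - η / 2 + η / 2 * Real.exp (-(γ x))))
              * (1 - p (jstar x))) := by linarith
        _ = q x * (2 * (1 - p (jstar x))) := by rw [hqx]; ring
        _ = q x * (∑ j, |S (k₀ + n) x j - Sstar x j|) := by rw [e2]
        _ ≤ q x * (q x ^ n * (∑ j, |S k₀ x j - Sstar x j|)) :=
            mul_le_mul_of_nonneg_left (ih x) (hq0 x).le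
        _ = q x ^ (n + 1) * (∑ j, |S k₀ x j - Sstar x j|) := by ring
  -- conclusion
  refine ⟨fun x => (1 + q x) / 2, fun x => ⟨by linarith [hq0 x], by linarith [hq1 x]⟩, ?_⟩
  intro k hk x
  have hd0pos : 0 < ∑ j, |S k₀ x j - Sstar x j| := by
    obtain ⟨b, hb⟩ : ∃ b : Fin c, b ≠ jstar x := by
      have h1 : 1 < Fintype.card (Fin c) := by rw [Fintype.card_fin]; omega
      exact Fintype.exists_ne_of_one_lt_card h1 (jstar x)
    have h1 : |S k₀ x b - Sstar x b| ≤ ∑ j, |S k₀ x j - Sstar x j| :=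
      Finset.single_le_sum (f := fun j => |S k₀ x j - Sstar x j|) (fun j _ => abs_nonneg _) (Finset.mem_univ b)
    have h2 : Sstar x b = 0 := by rw [hSstar, if_neg hb]
    have h3 : 0 < S k₀ x b := (hSW k₀ x).1 b
    have h4 : 0 < |S k₀ x b - Sstar x b| := by
      rw [h2, sub_zero, abs_of_pos h3]; exact h3
    linarith
  set n : ℕ := k - k₀ with hndef
  have hkn : k = k₀ + n := by omega
  have hn0 : n ≠ 0 := by omega
  have hmain := main n x
  rw [← hkn] at hmain
  have hqξ : q x ^ n < ((1 + q x) / 2) ^ n := by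
    apply pow_lt_pow_left₀ _ (hq0 x).le hn0
    linarith [hq1 x]
  calc (∑ j, |S k x j - Sstar x j|)
      ≤ q x ^ n * (∑ j, |S k₀ x j - Sstar x j|) := hmain
    _ < ((1 + q x) / 2) ^ n * (∑ j, |S k₀ x j - Sstar x j|) :=
        mul_lt_mul_of_pos_right hqξ hd0pos
end
end
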